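/- arXiv:1706.04742 — 3 statements merged into one kernel-verified Lean document; each statement's English description precedes it below -/
import Mathlib

section
/- Every 3-strong tournament is 1*-weakly connected; that is, for every pair of distinct vertices x, y of a 3-strong tournament T, there is a Hamiltonian directed path of T from x to y or from y to x. -/
variable {V : Type*}

/-- A tournament relation: irreflexive, and between any two distinct vertices
exactly one of the two possible arcs is present. -/
def IsTournament (r : V → V → Prop) : Prop :=
  (∀ v : V, ¬ r v v) ∧ ∀ u v : V, u ≠ v → (r u v ↔ ¬ r v u)

/-- Strong connectivity: every vertex reaches every other by a directed walk. -/
def StronglyConnected (r : V → V → Prop) : Prop :=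
  ∀ u v : V, Relation.ReflTransGen r u v

/-- `k`-strong: at least `k+1` vertices, and deleting any set of fewer than `k`
vertices leaves a strongly connected digraph. -/
def KStrong [Fintype V] (r : V → V → Prop) (k : ℕ) : Prop :=
  k + 1 ≤ Fintype.card V ∧
    ∀ S : Set V, S.ncard < k → ∀ u v : V, u ∉ S → v ∉ S →
      Relation.ReflTransGen (fun a b => a ∉ S ∧ b ∉ S ∧ r a b) u v

/-- A directed path from `u` to `v`, recorded as its (nodup) list of vertices. -/
def IsDipath (r : V → V → Prop) (u v : V) (p : List V) : Prop :=
  p.Chain' r ∧ p.Nodup ∧ p.head? = some u ∧ p.getLast? = some v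

/-- A Hamiltonian directed path from `u` to `v`: a directed path containing
every vertex. -/
def IsHamDipath (r : V → V → Prop) (u v : V) (p : List V) : Prop :=
  IsDipath r u v p ∧ ∀ w : V, w ∈ p

/-- A family of paths between `x` and `y` is internally disjoint if two distinct
paths share no vertex other than `x` and `y`. -/
def InternallyDisjoint (x y : V) {k : ℕ} (ps : Fin k → List V) : Prop :=
  ∀ i j : Fin k, i ≠ j → ∀ w : V, w ∈ ps i → w ∈ ps j → w = x ∨ w = y

/-- A strong `k*`-container between `x` and `y`: `k` internally disjoint directed
paths, all from `x` to `y` or all from `y` to `x`, whose union contains every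
vertex. -/
def StrongStarContainer (r : V → V → Prop) (x y : V) (k : ℕ) : Prop :=
  ∃ ps : Fin k → List V, Function.Injective ps ∧
    ((∀ i, IsDipath r x y (ps i)) ∨ (∀ i, IsDipath r y x (ps i))) ∧
    InternallyDisjoint x y ps ∧ (∀ w : V, ∃ i, w ∈ ps i)

/-- A weak `k*`-container between `x` and `y`: `k` internally disjoint directed
paths, each from `x` to `y` or from `y` to `x`, whose union contains every
vertex. -/
def WeakStarContainer (r : V → V → Prop) (x y : V) (k : ℕ) : Prop :=
  ∃ ps : Fin k → List V, Function.Injective ps ∧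
    (∀ i, IsDipath r x y (ps i) ∨ IsDipath r y x (ps i)) ∧
    InternallyDisjoint x y ps ∧ (∀ w : V, ∃ i, w ∈ ps i)

/-- The irregularity of the digraph is at most `k`:
`|d⁺(x) − d⁻(x)| ≤ k` for every vertex `x`. -/
def IrregularityLE (r : V → V → Prop) (k : ℕ) : Prop :=
  ∀ x : V, ((({y : V | r x y}.ncard : ℤ) - ({y : V | r y x}.ncard : ℤ)).natAbs) ≤ k

/-!
Since `T` is 3-strong, `T - {x, y}` is a strong tournament, so by Camion's theorem it has a
Hamiltonian cycle `u₀ → u₁ → ⋯ → u_{m-1} → u₀`, indexed by `ZMod m`. If `x → uᵢ` and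
`u_{i-1} → y` for some `i` (or the same with `x` and `y` exchanged), the cycle opened at `uᵢ`
splices between `x` and `y`. Otherwise strong connectivity forces every `uᵢ` to be dominated by
exactly one of `x`, `y`, alternately along the cycle; then `m` is even, and a Hamiltonian path of
`T - {x, y}` whose ends are two apart on the cycle extends to the required path. One is obtained
by moving a single `uᵢ` to between `u_{i+t}` and `u_{i+t+1}`; if no such move is possible, the
out-neighbours of each `uᵢ` on the cycle form an initial segment `u_{i+1}, …, u_{i+k}`. Then
3-strong connectivity gives `k ≥ 2`, hence `m ≥ 6` and an arc `u_j → u_{j+3}`, and the path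
`u_{j+1}, u_{j+2}, u_{j+4}, …, u_j, u_{j+3}` does it.
-/

namespace IsTournament

variable {r : V → V → Prop} {a b : V}

theorem ne_of_rel (hT : IsTournament r) (h : r a b) : a ≠ b :=
  fun hab => hT.1 a (hab ▸ h)

theorem asymm (hT : IsTournament r) (h : r a b) : ¬ r b a :=
  (hT.2 a b (hT.ne_of_rel h)).1 h

theorem not_rel_iff (hT : IsTournament r) (hab : a ≠ b) : ¬ r a b ↔ r b a :=
  (hT.2 b a hab.symm).symm

theorem comap {W : Type*} (hT : IsTournament r) {f : W → V} (hf : Function.Injective f) :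
    IsTournament fun a b => r (f a) (f b) :=
  ⟨fun a => hT.1 (f a), fun _ _ hab => hT.2 _ _ (hf.ne hab)⟩

end IsTournament

namespace Relation.ReflTransGen

variable {r : V → V → Prop} {a b : V}

theorem exists_rel_into {P : V → Prop} (h : ReflTransGen r a b) (ha : ¬ P a) (hb : P b) :
    ∃ p q, ¬ P p ∧ P q ∧ r p q := by
  induction h with
  | refl => exact absurd hb ha
  | @tail c d _ hcd ih =>
    by_cases hc : P c
    · exact ih hc
    · exact ⟨c, d, hc, hb, hcd⟩

theorem exists_isDipath (h : ReflTransGen r a b) : ∃ p, IsDipath r a b p := by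
  induction h with
  | refl => exact ⟨[a], List.isChain_singleton _, List.nodup_singleton _, rfl, rfl⟩
  | @tail c d _ hcd ih =>
    obtain ⟨p, hch, hnd, hhead, hlast⟩ := ih
    by_cases hd : d ∈ p
    · obtain ⟨p₁, p₂, rfl⟩ := List.append_of_mem hd
      have hpre : (p₁ ++ [d]) <+: p₁ ++ d :: p₂ := ⟨p₂, by simp⟩
      refine ⟨p₁ ++ [d], hch.prefix hpre, hnd.sublist hpre.sublist, ?_, List.getLast?_concat⟩
      cases p₁ <;> simpa using hhead
    · refine ⟨p ++ [d], hch.append (List.isChain_singleton _) ?_, ?_, ?_, List.getLast?_concat⟩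
      · simpa [hlast] using hcd
      · refine List.nodup_append.2 ⟨hnd, List.nodup_singleton _, ?_⟩
        simpa using fun w hw (hwd : w = d) => hd (hwd ▸ hw)
      · rw [List.head?_append, hhead]; rfl

theorem subtype {P : V → Prop} (h : ReflTransGen (fun a b => P a ∧ P b ∧ r a b) a b)
    (ha : P a) (hb : P b) :
    ReflTransGen (fun a b : Subtype P => r a b) ⟨a, ha⟩ ⟨b, hb⟩ := by
  induction h with
  | refl => exact .refl
  | tail _ hcd ih => exact (ih hcd.1).tail hcd.2.2

end Relation.ReflTransGen

namespace IsDipath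

variable {r : V → V → Prop} {a b c d : V} {p q : List V}

theorem singleton (a : V) : IsDipath r a a [a] :=
  ⟨List.isChain_singleton _, List.nodup_singleton _, rfl, rfl⟩

theorem append (hp : IsDipath r a b p) (hq : IsDipath r c d q) (hbc : r b c)
    (hpq : ∀ w ∈ p, w ∉ q) : IsDipath r a d (p ++ q) := by
  obtain ⟨hpc, hpn, hph, hpl⟩ := hp
  obtain ⟨hqc, hqn, hqh, hql⟩ := hq
  refine ⟨hpc.append hqc ?_, List.nodup_append.2 ⟨hpn, hqn, ?_⟩, ?_, ?_⟩
  · simpa [hpl, hqh] using hbc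
  · exact fun w hw w' hw' hww' => hpq w hw (hww' ▸ hw')
  · rw [List.head?_append, hph]; rfl
  · rw [List.getLast?_append, hql]; rfl

theorem isHamDipath_cons_append {x y : V} (hp : IsDipath r a b p)
    (hmem : ∀ w, w ∈ p ↔ w ≠ x ∧ w ≠ y) (hxy : x ≠ y) (hxa : r x a) (hby : r b y) :
    IsHamDipath r x y (x :: (p ++ [y])) := by
  refine ⟨(singleton x).append ((hp.append (singleton y) hby ?_)) hxa ?_, fun w => ?_⟩
  · simp only [List.mem_singleton]
    exact fun w hw hwy => ((hmem w).1 hw).2 hwy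
  · simpa [hxy] using fun hx => ((hmem x).1 hx).1 rfl
  · by_cases hwx : w = x
    · simp [hwx]
    by_cases hwy : w = y
    · simp [hwy]
    simp [(hmem w).2 ⟨hwx, hwy⟩]

theorem exists_isHamDipath {x y : V} (hp : IsDipath r a b p)
    (hmem : ∀ w, w ∈ p ↔ w ≠ x ∧ w ≠ y) (hxy : x ≠ y)
    (h : (r x a ∧ r b y) ∨ (r y a ∧ r b x)) :
    ∃ q, IsHamDipath r x y q ∨ IsHamDipath r y x q := by
  rcases h with ⟨hxa, hby⟩ | ⟨hya, hbx⟩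
  · exact ⟨_, .inl (hp.isHamDipath_cons_append hmem hxy hxa hby)⟩
  · exact ⟨_, .inr <|
      hp.isHamDipath_cons_append (fun w => (hmem w).trans and_comm) hxy.symm hya hbx⟩

end IsDipath

namespace KStrong

variable [Fintype V] {r : V → V → Prop} {k : ℕ} {S : Set V} {a b : V}

theorem stronglyConnected_compl (h : KStrong r k) (hS : S.ncard < k) :
    StronglyConnected fun a b : ↥Sᶜ => r a b :=
  fun a b => (h.2 S hS a b a.2 b.2).subtype a.2 b.2

theorem exists_out_neighbor (h : KStrong r k) (hS : S.ncard < k) (ha : a ∉ S) (hb : b ∉ S)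
    (hab : a ≠ b) : ∃ w ∉ S, r a w := by
  obtain rfl | ⟨w, ⟨-, hw, haw⟩, -⟩ := (h.2 S hS a b ha hb).cases_head
  · exact absurd rfl hab
  · exact ⟨w, hw, haw⟩

theorem exists_in_neighbor (h : KStrong r k) (hS : S.ncard < k) (ha : a ∉ S) (hb : b ∉ S)
    (hab : a ≠ b) : ∃ w ∉ S, r w b := by
  obtain rfl | ⟨w, -, hw, -, hwb⟩ := (h.2 S hS a b ha hb).cases_tail
  · exact absurd rfl hab
  · exact ⟨w, hw, hwb⟩

end KStrong

namespace ZMod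

variable {n : ℕ} {P : ZMod n → Prop}

theorem forall_of_add_one [NeZero n] {i : ZMod n} (hi : P i) (h : ∀ k, P k → P (k + 1))
    (j : ZMod n) : P j := by
  have key : ∀ t : ℕ, P (i + t) := by
    intro t
    induction t with
    | zero => simpa using hi
    | succ t ih => simpa [add_assoc] using h _ ih
  simpa using key (j - i).val

theorem forall_of_sub_one [NeZero n] {i : ZMod n} (hi : P i) (h : ∀ k, P k → P (k - 1))
    (j : ZMod n) : P j := by
  simpa using forall_of_add_one (P := fun k => P (-k)) (i := -i) (by simpa using hi)
    (fun k hk => by simpa [neg_add_rev, sub_eq_add_neg, add_comm] using h _ hk) (-j)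

theorem exists_of_not [NeZero n] {i j : ZMod n} (hi : P i) (hj : ¬ P j) :
    ∃ k, P k ∧ ¬ P (k + 1) := by
  by_contra! h
  exact hj (forall_of_add_one hi h j)

theorem even_of_forall_add_one_iff_not (h : ∀ k, P (k + 1) ↔ ¬ P k) : Even n := by
  have key : ∀ t : ℕ, P t ↔ (P 0 ↔ Even t) := by
    intro t
    induction t with
    | zero => simp
    | succ t ih => rw [Nat.cast_succ, h, ih, Nat.even_add_one]; tauto
  have := key n
  rw [natCast_self] at this
  tauto

end ZMod

def cycleArc {m : ℕ} (i : ZMod m) (n : ℕ) : List (ZMod m) :=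
  (List.range n).map fun k : ℕ => i + (k : ZMod m)

section CycleArc

variable {m : ℕ} (i : ZMod m) (n : ℕ)

theorem cycleArc_succ : cycleArc i (n + 1) = i :: cycleArc (i + 1) n := by
  simp [cycleArc, List.range_succ_eq_map, add_assoc, add_comm (1 : ZMod m)]

theorem cycleArc_add (n' : ℕ) :
    cycleArc i (n + n') = cycleArc i n ++ cycleArc (i + (n : ZMod m)) n' := by
  simp [cycleArc, List.range_add, add_assoc]

theorem isChain_cycleArc : (cycleArc i n).IsChain fun a b => b = a + 1 := by
  induction n generalizing i with
  | zero => simp [cycleArc]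
  | succ n ih =>
    rw [cycleArc_succ]
    cases n with
    | zero => simp [cycleArc]
    | succ n =>
      have h := ih (i + 1)
      rw [cycleArc_succ] at h ⊢
      exact List.isChain_cons_cons.2 ⟨rfl, h⟩

theorem head?_cycleArc : (cycleArc i (n + 1)).head? = some i := by
  rw [cycleArc_succ]; rfl

theorem getLast?_cycleArc : (cycleArc i (n + 1)).getLast? = some (i + (n : ZMod m)) := by
  rw [cycleArc_add, List.getLast?_append]
  simp [cycleArc]

variable {i}

theorem nodup_cycleArc : (cycleArc i m).Nodup := by
  refine List.Nodup.map_on (fun k hk k' hk' hkk' => ?_) List.nodup_range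
  rw [List.mem_range] at hk hk'
  rw [add_right_inj, ZMod.natCast_eq_natCast_iff'] at hkk'
  rwa [Nat.mod_eq_of_lt hk, Nat.mod_eq_of_lt hk'] at hkk'

theorem mem_cycleArc [NeZero m] (j : ZMod m) : j ∈ cycleArc i m := by
  simp only [cycleArc, List.mem_map, List.mem_range]
  exact ⟨(j - i).val, ZMod.val_lt _, by simp⟩

end CycleArc

def IsDicycle (r : V → V → Prop) {n : ℕ} (c : ZMod n → V) : Prop :=
  Function.Injective c ∧ ∀ i, r (c i) (c (i + 1))

section Dicycle

variable {r : V → V → Prop} {n : ℕ} {c : ZMod n → V}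

theorem mem_map_of_perm_cycleArc [NeZero n] {l : List (ZMod n)} {i : ZMod n}
    (hl : l.Perm (cycleArc i n)) {w : V} : w ∈ l.map c ↔ w ∈ Set.range c := by
  simp [hl.mem_iff, mem_cycleArc]

namespace IsDicycle

theorem neZero [Finite V] (hc : IsDicycle r c) : NeZero n := by
  refine ⟨fun hn => ?_⟩
  subst hn
  have : Finite ℤ := Finite.of_injective c hc.1
  exact not_finite ℤ

theorem isDipath_map (hc : IsDicycle r c) {l : List (ZMod n)} {i a b : ZMod n}
    (hl : l.Perm (cycleArc i n)) (hch : l.IsChain fun a b => r (c a) (c b))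
    (ha : l.head? = some a) (hb : l.getLast? = some b) : IsDipath r (c a) (c b) (l.map c) :=
  ⟨List.isChain_map _ |>.2 hch, (hl.nodup_iff.2 nodup_cycleArc).map hc.1, by simp [ha],
    by simp [hb]⟩

theorem isDipath_cycleArc [NeZero n] (hc : IsDicycle r c) (i : ZMod n) :
    IsDipath r (c i) (c (i - 1)) ((cycleArc i n).map c) := by
  obtain ⟨k, rfl⟩ := Nat.exists_eq_add_one_of_ne_zero (NeZero.ne n)
  refine hc.isDipath_map (List.Perm.refl _) ((isChain_cycleArc i _).imp ?_)
    (head?_cycleArc i k) ?_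
  · rintro a _ rfl
    exact hc.2 a
  · rw [getLast?_cycleArc]
    congr 1
    have : ((k + 1 : ℕ) : ZMod (k + 1)) = 0 := ZMod.natCast_self _
    push_cast at this
    linear_combination this

theorem apply_add_ne (hc : IsDicycle r c) (i : ZMod n) {s : ℕ} (hs₀ : 0 < s) (hs : s < n) :
    c (i + s) ≠ c i := by
  intro h
  have h' := hc.1 h
  rw [add_eq_left, ZMod.natCast_eq_zero_iff] at h'
  exact absurd (Nat.le_of_dvd hs₀ h') (by omega)

end IsDicycle

theorem IsDipath.exists_isDicycle {p : List V} {a b : V} (hp : IsDipath r a b p) (hba : r b a) :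
    ∃ n, ∃ c : ZMod n → V, IsDicycle r c ∧ Set.range c = {w | w ∈ p} := by
  obtain ⟨hch, hnd, hhead, hlast⟩ := hp
  obtain ⟨k, hk⟩ : ∃ k, p.length = k + 1 :=
    Nat.exists_eq_add_one_of_ne_zero (by rintro h; simp [List.length_eq_zero_iff.1 h] at hhead)
  have hlt (j : ZMod (k + 1)) : j.val < p.length := by rw [hk]; exact ZMod.val_lt j
  refine ⟨k + 1, fun j => p[j.val]'(hlt j), ⟨fun i j hij => ?_, fun j => ?_⟩, ?_⟩
  · exact ZMod.val_injective _ ((hnd.getElem_inj_iff).1 hij)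
  · have hval : (j + 1).val = (j.val + 1) % (k + 1) := by
      rw [ZMod.val_add, ZMod.val_one_eq_one_mod, Nat.add_mod_mod]
    simp only [hval]
    rcases Nat.lt_or_ge (j.val + 1) (k + 1) with h | h
    · simp only [Nat.mod_eq_of_lt h]
      exact List.isChain_iff_getElem.1 hch _ (by omega)
    · have hj : j.val = k := by have := j.val_lt; omega
      simp only [hj, Nat.mod_self]
      rw [List.head?_eq_getElem?, List.getElem?_eq_getElem (by omega)] at hhead
      rw [List.getLast?_eq_getElem?, List.getElem?_eq_getElem (by omega)] at hlast
      simp only [Option.some.injEq] at hhead hlast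
      convert hba using 2
      simpa [hk] using hlast
  · ext w
    simp only [Set.mem_range, Set.mem_ofPred_eq, List.mem_iff_getElem]
    refine ⟨fun ⟨j, hj⟩ => ⟨_, _, hj⟩, fun ⟨t, ht, htw⟩ => ⟨t, ?_⟩⟩
    simp only [ZMod.val_cast_of_lt (hk ▸ ht), htw]

theorem IsDicycle.exists_append [NeZero n] (hc : IsDicycle r c) {ws : List V} {a b : V}
    (hws : IsDipath r a b ws) (hdisj : ∀ w ∈ ws, w ∉ Set.range c) {k : ZMod n}
    (hka : r (c k) a) (hbk : r b (c (k + 1))) :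
    ∃ n', ∃ c' : ZMod n' → V, IsDicycle r c' ∧ Set.range c' = Set.range c ∪ {w | w ∈ ws} := by
  have hpath := (hc.isDipath_cycleArc (k + 1)).append hws (by simpa using hka)
    fun w hw hws => hdisj w hws ((mem_map_of_perm_cycleArc (List.Perm.refl _)).1 hw)
  obtain ⟨n', c', hc', hrange⟩ := hpath.exists_isDicycle hbk
  refine ⟨n', c', hc', ?_⟩
  ext w
  simp [hrange, mem_map_of_perm_cycleArc (List.Perm.refl _)]

theorem IsDicycle.exists_insert [NeZero n] (hT : IsTournament r) (hc : IsDicycle r c) {w : V}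
    (hw : w ∉ Set.range c) {i j : ZMod n} (hin : r (c i) w) (hout : r w (c j)) :
    ∃ n', ∃ c' : ZMod n' → V, IsDicycle r c' ∧ Set.range c' = insert w (Set.range c) := by
  obtain ⟨k, hk, hk'⟩ := ZMod.exists_of_not (P := fun k => r (c k) w) hin (hT.asymm hout)
  have hk' : r w (c (k + 1)) := (hT.not_rel_iff fun h => hw ⟨_, h⟩).1 hk'
  obtain ⟨n', c', hc', hrange⟩ :=
    hc.exists_append (IsDipath.singleton w) (by simpa using hw) hk hk'
  refine ⟨n', c', hc', ?_⟩
  ext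
  simp [hrange, or_comm]

theorem IsTournament.exists_dominated_rel_dominating (hT : IsTournament r)
    (hs : StronglyConnected r) {A : Set V} {a v : V} (ha : a ∈ A) (hv : v ∉ A)
    (hmix : ∀ w ∉ A, ∀ b ∈ A, ∀ b' ∈ A, r b w → ¬ r w b') :
    ∃ p q, p ∉ A ∧ q ∉ A ∧ (∀ b ∈ A, r b p) ∧ r p q ∧ ∀ b ∈ A, r q b := by
  have hA {w b} (hw : w ∉ A) (hb : b ∈ A) : w ≠ b := fun h => hw (h ▸ hb)
  have hsplit : ∀ w ∉ A, (∀ b ∈ A, r b w) ∨ ∀ b ∈ A, r w b := by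
    intro w hw
    by_cases haw : r a w
    · exact .inl fun b hb => (hT.not_rel_iff (hA hw hb)).1 (hmix w hw a ha b hb haw)
    · exact .inr fun b hb => (hT.not_rel_iff (hA hw hb).symm).1
        fun hbw => hmix w hw b hb a ha hbw ((hT.not_rel_iff (hA hw ha).symm).1 haw)
  rcases hsplit v hv with hin | hout
  · obtain ⟨p, q, hp, hq, hpq⟩ := (hs v a).exists_rel_into
      (P := fun w => ¬ (w ∉ A ∧ ∀ b ∈ A, r b w)) (by simpa using ⟨hv, hin⟩) (by simp [ha])
    obtain ⟨hpA, hpin⟩ := not_not.1 hp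
    have hqA : q ∉ A := fun hqA => hT.asymm (hpin q hqA) hpq
    refine ⟨p, q, hpA, hqA, hpin, hpq, (hsplit q hqA).resolve_left fun h => hq ⟨hqA, h⟩⟩
  · obtain ⟨p, q, hp, ⟨hqA, hqout⟩, hpq⟩ := (hs a v).exists_rel_into
      (P := fun w => w ∉ A ∧ ∀ b ∈ A, r w b) (by simp [ha]) ⟨hv, hout⟩
    have hpA : p ∉ A := fun hpA => hT.asymm (hqout p hpA) hpq
    refine ⟨p, q, hpA, hqA, (hsplit p hpA).resolve_right fun h => hp ⟨hpA, h⟩, hpq, hqout⟩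

theorem IsDicycle.exists_range_ssubset [NeZero n] (hT : IsTournament r)
    (hs : StronglyConnected r) (hc : IsDicycle r c) {v : V} (hv : v ∉ Set.range c) :
    ∃ n', ∃ c' : ZMod n' → V, IsDicycle r c' ∧ Set.range c ⊂ Set.range c' := by
  by_cases hmix : ∃ w ∉ Set.range c, (∃ i, r (c i) w) ∧ ∃ j, r w (c j)
  · obtain ⟨w, hw, ⟨i, hi⟩, ⟨j, hj⟩⟩ := hmix
    obtain ⟨n', c', hc', hrange⟩ := hc.exists_insert hT hw hi hj
    exact ⟨n', c', hc', hrange ▸ Set.ssubset_insert hw⟩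
  · obtain ⟨p, q, hp, hq, hin, hpq, hout⟩ := hT.exists_dominated_rel_dominating hs
      (Set.mem_range_self 0) hv (by push Not at hmix; grind)
    have hws : IsDipath r p q [p, q] :=
      (IsDipath.singleton p).append (IsDipath.singleton q) hpq (by simpa using hT.ne_of_rel hpq)
    have hdisj : ∀ w ∈ [p, q], w ∉ Set.range c := by
      simp only [List.mem_cons, List.not_mem_nil, or_false]
      rintro w (rfl | rfl) <;> assumption
    obtain ⟨n', c', hc', hrange⟩ := hc.exists_append hws hdisj
      (hin _ (Set.mem_range_self 0)) (hout _ (Set.mem_range_self _))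
    exact ⟨n', c', hc', hrange ▸ Set.ssubset_union_left_iff.2 fun h => hp (h (by simp))⟩

/-- Camion's theorem. -/
theorem IsTournament.exists_isDicycle_surjective [Finite V] [Nontrivial V]
    (hT : IsTournament r) (hs : StronglyConnected r) :
    ∃ n, ∃ c : ZMod n → V, IsDicycle r c ∧ Function.Surjective c := by
  obtain ⟨a, b, hab⟩ : ∃ a b, r a b := by
    obtain ⟨a, b, hab⟩ := exists_pair_ne V
    by_cases h : r a b
    · exact ⟨a, b, h⟩
    · exact ⟨b, a, (hT.not_rel_iff hab).1 h⟩
  obtain ⟨p, hp⟩ := (hs b a).exists_isDipath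
  obtain ⟨n, c, hc, -⟩ := hp.exists_isDicycle hab
  suffices key : ∀ N n (c : ZMod n → V), IsDicycle r c → (Set.range c)ᶜ.ncard = N →
      ∃ n, ∃ c : ZMod n → V, IsDicycle r c ∧ Function.Surjective c from key _ n c hc rfl
  intro N
  induction N using Nat.strong_induction_on with
  | _ N ih =>
    rintro n c hc rfl
    by_cases hsurj : Function.Surjective c
    · exact ⟨n, c, hc, hsurj⟩
    obtain ⟨v, hv⟩ : ∃ v, v ∉ Set.range c := by simpa [Function.Surjective] using hsurj
    have := hc.neZero
    obtain ⟨n', c', hc', hsub⟩ := hc.exists_range_ssubset hT hs hv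
    exact ih _ (Set.ncard_lt_ncard (compl_lt_compl_iff_lt.2 hsub)) n' c' hc' rfl

end Dicycle

theorem KStrong.exists_isDicycle_range_eq [Fintype V] {r : V → V → Prop} {x y : V}
    (hT : IsTournament r) (h3 : KStrong r 3) (hxy : x ≠ y) :
    ∃ m, ∃ u : ZMod m → V, IsDicycle r u ∧ Set.range u = {x, y}ᶜ := by
  have hS : ({x, y} : Set V).ncard < 3 := by rw [Set.ncard_pair hxy]; omega
  have : Nontrivial ↥({x, y} : Set V)ᶜ := by
    rw [Set.nontrivial_coe_sort, ← Set.one_lt_ncard_iff_nontrivial, Set.ncard_compl,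
      Set.ncard_pair hxy, Nat.card_eq_fintype_card]
    have := h3.1
    omega
  obtain ⟨m, c, hc, hsurj⟩ := (hT.comap Subtype.val_injective).exists_isDicycle_surjective
    (h3.stronglyConnected_compl hS)
  refine ⟨m, Subtype.val ∘ c, ⟨Subtype.val_injective.comp hc.1, hc.2⟩, ?_⟩
  rw [Set.range_comp, hsurj.range_eq, Set.image_univ, Subtype.range_coe]

section AvoidingDicycle

variable {r : V → V → Prop} {x y : V} {m : ℕ} {u : ZMod m → V}

theorem ne_and_ne_of_range_eq (hrange : Set.range u = {x, y}ᶜ) (i : ZMod m) :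
    u i ≠ x ∧ u i ≠ y := by
  simpa [hrange] using Set.mem_range_self (f := u) i

theorem exists_eq_of_range_eq (hrange : Set.range u = {x, y}ᶜ) {w : V} (hx : w ≠ x)
    (hy : w ≠ y) : ∃ i, u i = w := by
  simpa [← Set.mem_range, hrange] using ⟨hx, hy⟩

theorem mem_map_iff_of_range_eq [NeZero m] (hrange : Set.range u = {x, y}ᶜ)
    {l : List (ZMod m)} {i : ZMod m} (hl : l.Perm (cycleArc i m)) {w : V} :
    w ∈ l.map u ↔ w ≠ x ∧ w ≠ y := by
  simp [mem_map_of_perm_cycleArc hl, hrange]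

theorem exists_isHamDipath_of_splice [NeZero m] (hu : IsDicycle r u)
    (hrange : Set.range u = {x, y}ᶜ) (hxy : x ≠ y) {i : ZMod m}
    (h : (r x (u i) ∧ r (u (i - 1)) y) ∨ (r y (u i) ∧ r (u (i - 1)) x)) :
    ∃ p, IsHamDipath r x y p ∨ IsHamDipath r y x p :=
  (hu.isDipath_cycleArc i).exists_isHamDipath
    (fun _ => mem_map_iff_of_range_eq hrange (List.Perm.refl _)) hxy h

theorem rel_sub_one_of_not_splice (hT : IsTournament r) (hrange : Set.range u = {x, y}ᶜ)
    (hno : ∀ i, ¬ (r x (u i) ∧ r (u (i - 1)) y)) {i : ZMod m} (h : r x (u i)) :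
    r y (u (i - 1)) :=
  (hT.not_rel_iff (ne_and_ne_of_range_eq hrange _).2).1 fun h' => hno i ⟨h, h'⟩

theorem rel_iff_not_rel_of_not_splice [NeZero m] [Fintype V] (hT : IsTournament r)
    (h3 : KStrong r 3) (hrange : Set.range u = {x, y}ᶜ) (hxy : x ≠ y)
    (hnox : ∀ i, ¬ (r x (u i) ∧ r (u (i - 1)) y)) (hnoy : ∀ i, ¬ (r y (u i) ∧ r (u (i - 1)) x))
    (i : ZMod m) : r y (u i) ↔ ¬ r x (u i) := by
  have hrange' : Set.range u = {y, x}ᶜ := by rw [hrange, Set.pair_comm]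
  have hxy_sub : ∀ {j}, r x (u j) → r y (u (j - 1)) := rel_sub_one_of_not_splice hT hrange hnox
  have hyx_sub : ∀ {j}, r y (u j) → r x (u (j - 1)) := rel_sub_one_of_not_splice hT hrange' hnoy
  have hS : ({y} : Set V).ncard < 3 := by rw [Set.ncard_singleton]; omega
  have hxS : x ∉ ({y} : Set V) := hxy
  have h0S : u 0 ∉ ({y} : Set V) := (ne_and_ne_of_range_eq hrange 0).2
  have h0x : u 0 ≠ x := (ne_and_ne_of_range_eq hrange 0).1
  have hcover : ∀ j, r x (u j) ∨ r y (u j) := by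
    obtain ⟨w, hwy, hxw⟩ := h3.exists_out_neighbor hS hxS h0S h0x.symm
    obtain ⟨j, rfl⟩ := exists_eq_of_range_eq hrange (hT.ne_of_rel hxw).symm hwy
    exact ZMod.forall_of_sub_one (P := fun j => r x (u j) ∨ r y (u j)) (.inl hxw)
      fun k hk => hk.elim (.inr ∘ hxy_sub) (.inl ∘ hyx_sub)
  -- a vertex dominated by both would propagate backwards to all of them, leaving `x` without
  -- an in-neighbour in `T - y`
  have hboth : ¬ (r x (u i) ∧ r y (u i)) := fun hi => by
    have hall := ZMod.forall_of_sub_one (P := fun j => r x (u j) ∧ r y (u j)) hi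
      fun k hk => ⟨hyx_sub hk.2, hxy_sub hk.1⟩
    obtain ⟨w, hwy, hwx⟩ := h3.exists_in_neighbor hS h0S hxS h0x
    obtain ⟨j, rfl⟩ := exists_eq_of_range_eq hrange (hT.ne_of_rel hwx) hwy
    exact hT.asymm hwx (hall j).1
  exact ⟨fun hy hx => hboth ⟨hx, hy⟩, (hcover i).resolve_left⟩

theorem rel_add_one_iff_not_rel (hT : IsTournament r) (hrange : Set.range u = {x, y}ᶜ)
    (hnox : ∀ i, ¬ (r x (u i) ∧ r (u (i - 1)) y)) (hnoy : ∀ i, ¬ (r y (u i) ∧ r (u (i - 1)) x))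
    (hcol : ∀ i, r y (u i) ↔ ¬ r x (u i)) (i : ZMod m) : r x (u (i + 1)) ↔ ¬ r x (u i) := by
  have hrange' : Set.range u = {y, x}ᶜ := by rw [hrange, Set.pair_comm]
  refine ⟨fun h => (hcol i).1 (by simpa using rel_sub_one_of_not_splice hT hrange hnox h),
    fun h => by_contra fun h' => h ?_⟩
  simpa using rel_sub_one_of_not_splice hT hrange' hnoy ((hcol _).2 h')

theorem exists_isHamDipath_of_perm [NeZero m] (hT : IsTournament r) (hu : IsDicycle r u)
    (hrange : Set.range u = {x, y}ᶜ) (hxy : x ≠ y) (hcol : ∀ i, r y (u i) ↔ ¬ r x (u i))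
    {l : List (ZMod m)} {i a b : ZMod m} (hl : l.Perm (cycleArc i m))
    (hch : l.IsChain fun a b => r (u a) (u b)) (ha : l.head? = some a) (hb : l.getLast? = some b)
    (hab : r x (u a) ↔ r x (u b)) : ∃ p, IsHamDipath r x y p ∨ IsHamDipath r y x p := by
  refine (hu.isDipath_map hl hch ha hb).exists_isHamDipath
    (fun _ => mem_map_iff_of_range_eq hrange hl) hxy ?_
  obtain ⟨hbx, hby⟩ := ne_and_ne_of_range_eq hrange b
  by_cases hxa : r x (u a)
  · exact .inl ⟨hxa, (hT.not_rel_iff hby.symm).1 fun h => (hcol b).1 h (hab.1 hxa)⟩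
  · exact .inr ⟨(hcol a).2 hxa, (hT.not_rel_iff hbx.symm).1 fun h => hxa (hab.2 h)⟩

theorem exists_isHamDipath_of_insertion [NeZero m] (hT : IsTournament r) (hu : IsDicycle r u)
    (hrange : Set.range u = {x, y}ᶜ) (hxy : x ≠ y) (hcol : ∀ i, r y (u i) ↔ ¬ r x (u i))
    (halt : ∀ i, r x (u (i + 1)) ↔ ¬ r x (u i)) {i : ZMod m} {t : ℕ} (ht : 1 ≤ t)
    (htm : t + 2 ≤ m) (hin : r (u (i + t)) (u i)) (hout : r (u i) (u (i + t + 1))) :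
    ∃ p, IsHamDipath r x y p ∨ IsHamDipath r y x p := by
  obtain ⟨t, rfl⟩ : ∃ t', t = t' + 1 := ⟨t - 1, by omega⟩
  obtain ⟨s, rfl⟩ : ∃ s, m = t + s + 3 := ⟨m - t - 3, by omega⟩
  have hzero : ((t + s + 3 : ℕ) : ZMod (t + s + 3)) = 0 := ZMod.natCast_self _
  push_cast at hin hout hzero
  have harc (j : ZMod (t + s + 3)) (k : ℕ) : (cycleArc j k).IsChain fun a b => r (u a) (u b) :=
    (isChain_cycleArc j k).imp (by rintro a _ rfl; exact hu.2 a)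
  refine exists_isHamDipath_of_perm hT hu hrange hxy hcol (i := i) (a := i + 1) (b := i - 1)
    (l := cycleArc (i + 1) (t + 1) ++ i :: cycleArc (i + 1 + (t + 1 : ℕ)) (s + 1)) ?_ ?_ ?_ ?_ ?_
  · rw [congrArg (cycleArc i) (show t + s + 3 = (t + 1) + (s + 1) + 1 by ring),
      cycleArc_succ i, cycleArc_add (i + 1) (t + 1) (s + 1)]
    exact List.perm_middle
  · refine (harc _ _).append (List.isChain_cons.2 ⟨?_, harc _ _⟩) ?_
    · simp only [head?_cycleArc, Option.mem_def, Option.some.injEq, forall_eq']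
      rwa [show i + 1 + ((t + 1 : ℕ) : ZMod (t + s + 3)) = i + (t + 1) + 1 by push_cast; ring]
    · simp only [getLast?_cycleArc, List.head?_cons, Option.mem_def, Option.some.injEq,
        forall_eq']
      rwa [show i + 1 + (t : ZMod (t + s + 3)) = i + (t + 1) by ring]
  · rw [List.head?_append, head?_cycleArc]
    rfl
  · rw [List.getLast?_append, List.getLast?_cons, getLast?_cycleArc]
    simp only [Option.getD_some, Option.some_or, Option.some.injEq]
    push_cast
    linear_combination hzero
  · rw [halt, ← sub_add_cancel i 1, halt, sub_add_cancel, not_not]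

theorem rel_add_of_rel_add_of_le (hT : IsTournament r) (hu : IsDicycle r u)
    (hno : ∀ i (t : ℕ), 1 ≤ t → t + 2 ≤ m → r (u (i + t)) (u i) → ¬ r (u i) (u (i + t + 1)))
    (i : ZMod m) (s t : ℕ) (ht : 1 ≤ t) (hts : t ≤ s) (hs : s < m) (h : r (u i) (u (i + s))) :
    r (u i) (u (i + t)) := by
  induction s with
  | zero => omega
  | succ s ih =>
    rcases hts.eq_or_lt with rfl | hts
    · exact h
    refine ih (by omega) (by omega) (by_contra fun hn => hno i s (by omega) (by omega) ?_ ?_)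
    · exact (hT.not_rel_iff (hu.apply_add_ne i (by omega) (by omega)).symm).1 hn
    · simpa [add_assoc] using h

theorem rel_add_two_of_rel [NeZero m] [Fintype V] (hT : IsTournament r) (h3 : KStrong r 3)
    (hu : IsDicycle r u) (hrange : Set.range u = {x, y}ᶜ) (hxy : x ≠ y)
    (hseg : ∀ i (s t : ℕ), 1 ≤ t → t ≤ s → s < m → r (u i) (u (i + s)) → r (u i) (u (i + t)))
    {i : ZMod m} (hx : r x (u i)) : r (u i) (u (i + 2)) := by
  have hS : ({u (i + 1), y} : Set V).ncard < 3 :=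
    (Set.ncard_insert_le _ _).trans_lt (by rw [Set.ncard_singleton]; omega)
  -- `u i` keeps an out-neighbour when `u (i + 1)` and `y` are deleted; as `x → u i`, it is a
  -- cycle vertex at least two steps ahead
  obtain ⟨w, hwS, hiw⟩ := h3.exists_out_neighbor hS
    (by simpa using ⟨hT.ne_of_rel (hu.2 i), (ne_and_ne_of_range_eq hrange i).2⟩)
    (by simpa using ⟨(ne_and_ne_of_range_eq hrange (i + 1)).1.symm, hxy⟩)
    (ne_and_ne_of_range_eq hrange i).1
  simp only [Set.mem_insert_iff, Set.mem_singleton_iff, not_or] at hwS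
  obtain ⟨j, rfl⟩ := exists_eq_of_range_eq hrange (fun h => hT.asymm hx (h ▸ hiw)) hwS.2
  have hj : ((j - i).val : ZMod m) = j - i := ZMod.natCast_zmod_val _
  have h0 : (j - i).val ≠ 0 := fun h0 => by
    rw [h0, Nat.cast_zero, eq_comm, sub_eq_zero] at hj
    exact hT.1 _ (hj ▸ hiw)
  have h1 : (j - i).val ≠ 1 := fun h1 => by
    rw [h1, Nat.cast_one, eq_comm, sub_eq_iff_eq_add'] at hj
    exact hwS.1 (hj ▸ rfl)
  exact_mod_cast hseg i (j - i).val 2 (by omega) (by omega) (ZMod.val_lt _)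
    (by simpa [hj] using hiw)

theorem six_le_of_even [NeZero m] (hT : IsTournament r) (heven : Even m)
    (h2 : ∀ i, r (u i) (u (i + 2))) : 6 ≤ m := by
  obtain ⟨k, rfl⟩ := heven
  rcases k with _ | _ | _ | k
  · exact absurd rfl (NeZero.ne (0 + 0))
  · have h := h2 0
    rw [show (0 : ZMod (1 + 1)) + 2 = 0 by decide] at h
    exact absurd h (hT.1 _)
  · have h := h2 2
    rw [show (2 : ZMod (2 + 2)) + 2 = 0 by decide] at h
    exact absurd h (hT.asymm (by simpa using h2 0))
  · omega

theorem exists_rel_add_three [NeZero m] (hT : IsTournament r) (hu : IsDicycle r u) (hm : 6 ≤ m)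
    (hseg : ∀ i (s t : ℕ), 1 ≤ t → t ≤ s → s < m → r (u i) (u (i + s)) → r (u i) (u (i + t))) :
    ∃ j, r (u j) (u (j + 3)) := by
  by_cases h : r (u 0) (u 3)
  · exact ⟨0, by simpa using h⟩
  have hne : u 0 ≠ u 3 := by
    simpa using (hu.apply_add_ne 0 (s := 3) (by norm_num) (by omega)).symm
  have hback : r (u 3) (u (3 + ((m - 3 : ℕ) : ZMod m))) := by
    rw [show (3 : ZMod m) + ((m - 3 : ℕ) : ZMod m) = 0 by
      rw [Nat.cast_sub (by omega), ZMod.natCast_self]; push_cast; ring]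
    exact (hT.not_rel_iff hne).1 h
  exact ⟨3, by exact_mod_cast hseg 3 (m - 3) 3 (by norm_num) (by omega) (by omega) hback⟩

theorem exists_isHamDipath_of_skip [NeZero m] (hT : IsTournament r) (hu : IsDicycle r u)
    (hrange : Set.range u = {x, y}ᶜ) (hxy : x ≠ y) (hcol : ∀ i, r y (u i) ↔ ¬ r x (u i))
    (halt : ∀ i, r x (u (i + 1)) ↔ ¬ r x (u i)) {i : ZMod m} (hm : 4 ≤ m)
    (h1 : r (u (i - 1)) (u (i + 1))) (h3 : r (u (i - 3)) (u i)) :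
    ∃ p, IsHamDipath r x y p ∨ IsHamDipath r y x p := by
  obtain ⟨s, rfl⟩ : ∃ s, m = s + 4 := ⟨m - 4, by omega⟩
  have hzero : ((s + 4 : ℕ) : ZMod (s + 4)) = 0 := ZMod.natCast_self _
  push_cast at hzero
  have harc (j : ZMod (s + 4)) (k : ℕ) : (cycleArc j k).IsChain fun a b => r (u a) (u b) :=
    (isChain_cycleArc j k).imp (by rintro a _ rfl; exact hu.2 a)
  refine exists_isHamDipath_of_perm hT hu hrange hxy hcol (i := i - 2) (a := i - 2) (b := i)
    (l := [i - 2, i - 1] ++ (cycleArc (i + 1) (s + 1) ++ [i])) ?_ ?_ rfl ?_ ?_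
  · have harc4 :
        cycleArc (i - 2) (s + 4) = (i - 2) :: (i - 1) :: i :: cycleArc (i + 1) (s + 1) := by
      rw [congrArg (cycleArc (i - 2)) (show s + 4 = s + 1 + 1 + 1 + 1 by ring), cycleArc_succ,
        cycleArc_succ, cycleArc_succ, show i - 2 + 1 = i - 1 by ring, show i - 1 + 1 = i by ring]
    rw [harc4]
    exact ((List.perm_append_singleton _ _).cons _).cons _
  · refine List.IsChain.append ?_ ((harc _ _).append (List.isChain_singleton _) ?_) ?_
    · simpa [List.isChain_pair, show i - 2 + 1 = i - 1 by ring] using hu.2 (i - 2)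
    · simp only [getLast?_cycleArc, List.head?_cons, Option.mem_def, Option.some.injEq,
        forall_eq']
      rwa [show i + 1 + (s : ZMod (s + 4)) = i - 3 by linear_combination hzero]
    · simpa [List.head?_append, head?_cycleArc] using h1
  · rw [← List.append_assoc, List.getLast?_concat]
  · have h₁ := halt (i - 1)
    have h₂ := halt (i - 2)
    rw [sub_add_cancel] at h₁
    rw [show i - 2 + 1 = i - 1 by ring] at h₂
    tauto

end AvoidingDicycle

/-- Every 3-strong tournament is 1*-weakly connected. -/
theorem stmt1 [Fintype V] (r : V → V → Prop) (hT : IsTournament r)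
    (h3 : KStrong r 3) (x y : V) (hxy : x ≠ y) :
    ∃ p : List V, IsHamDipath r x y p ∨ IsHamDipath r y x p := by
  obtain ⟨m, u, hu, hrange⟩ := h3.exists_isDicycle_range_eq hT hxy
  have := hu.neZero
  by_cases hsplice : ∃ i, (r x (u i) ∧ r (u (i - 1)) y) ∨ (r y (u i) ∧ r (u (i - 1)) x)
  · obtain ⟨i, hi⟩ := hsplice
    exact exists_isHamDipath_of_splice hu hrange hxy hi
  simp only [not_exists, not_or, forall_and] at hsplice
  obtain ⟨hnox, hnoy⟩ := hsplice
  have hcol := rel_iff_not_rel_of_not_splice hT h3 hrange hxy hnox hnoy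
  have halt := rel_add_one_iff_not_rel hT hrange hnox hnoy hcol
  by_cases hins : ∃ i, ∃ t : ℕ, 1 ≤ t ∧ t + 2 ≤ m ∧ r (u (i + t)) (u i) ∧ r (u i) (u (i + t + 1))
  · obtain ⟨i, t, ht, htm, hin, hout⟩ := hins
    exact exists_isHamDipath_of_insertion hT hu hrange hxy hcol halt ht htm hin hout
  push Not at hins
  have hseg := rel_add_of_rel_add_of_le hT hu hins
  have h2 (i : ZMod m) : r (u i) (u (i + 2)) := by
    by_cases hx : r x (u i)
    · exact rel_add_two_of_rel hT h3 hu hrange hxy hseg hx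
    · exact rel_add_two_of_rel hT h3 hu (by rw [hrange, Set.pair_comm]) hxy.symm hseg
        ((hcol i).2 hx)
  have h6 := six_le_of_even hT (ZMod.even_of_forall_add_one_iff_not (P := (r x <| u ·)) halt) h2
  obtain ⟨j, hj⟩ := exists_rel_add_three hT hu h6 hseg
  exact exists_isHamDipath_of_skip hT hu hrange hxy hcol halt (i := j + 3) (by omega)
    (by simpa [show j + 3 - 1 + 2 = j + 3 + 1 by ring] using h2 (j + 3 - 1))
    (by simpa using hj)
end

section
/- For every integer k ≥ 1, if T is a 2k-strong tournament such that for every pair of distinct vertices x, y there is a directed path of length 2 from x to y or from y to x, then T is (k+2)*-weakly connected; that is, between every pair of distinct vertices of T there exist k+2 internally disjoint directed paths (each in either direction) whose union contains every vertex of T. -/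
/-!
Call `v` a middle vertex if `x → v → y` or `y → v → x`; by hypothesis there is one. If there are
at least `k` middle vertices, `k` of them give `k` internally disjoint paths of length 2. Otherwise
take all `g` of them together with `k - g` vertex-disjoint arcs `a → b` from a common
out-neighbour `a` to a common in-neighbour `b` of `x` and `y`, each giving a path `x → a → b → y`.
Such arcs are found greedily: after fewer than `k - g` of them, deleting their ends, the middle
vertices and `y` removes fewer than `2k` vertices, so `x` still reaches a free common in-neighbour,
and the first arc leaving `{x} ∪ {common out-neighbours}` on the way is a new arc; if no free
common in-neighbour exists, `y` would have fewer than `2k` in-neighbours. The inner vertices of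
these `k` paths form a set `W` of at most `2k - 1` vertices, so `T - W` is a strong tournament and,
by Camion's theorem, has a Hamiltonian cycle; its two halves between `x` and `y` are the last two
paths.
-/

variable {V : Type*}

open Finset

section Connectivity

variable {r : V → V → Prop}

theorem IsTournament.asymm_s7 (hT : IsTournament r) {u v : V} (h : r u v) : ¬ r v u := by
  rcases eq_or_ne u v with rfl | hne
  · exact hT.1 u
  · exact (hT.2 u v hne).mp h

theorem IsTournament.ne_of_rel_s7 (hT : IsTournament r) {u v : V} (h : r u v) : u ≠ v := by
  rintro rfl
  exact hT.1 u h

theorem IsTournament.rel_or_rel (hT : IsTournament r) {u v : V} (hne : u ≠ v) :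
    r u v ∨ r v u :=
  (em (r v u)).elim Or.inr fun h => Or.inl ((hT.2 u v hne).mpr h)

theorem IsTournament.comap_s7 {W : Type*} (hT : IsTournament r) {f : W → V}
    (hf : Function.Injective f) : IsTournament fun a b => r (f a) (f b) :=
  ⟨fun v => hT.1 (f v), fun u v huv => hT.2 (f u) (f v) (hf.ne huv)⟩

theorem Relation.ReflTransGen.exists_rel_leaving {R : V → V → Prop} {P : V → Prop} {a b : V}
    (h : Relation.ReflTransGen R a b) (ha : P a) (hb : ¬ P b) :
    ∃ u v, P u ∧ ¬ P v ∧ R u v := by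
  induction h with
  | refl => exact absurd ha hb
  | @tail c d _ hcd ih =>
    by_cases hc : P c
    · exact ⟨c, d, hc, hb, hcd⟩
    · exact ih hc

theorem StronglyConnected.exists_rel_leaving (hs : StronglyConnected r) {P : V → Prop}
    {a b : V} (ha : P a) (hb : ¬ P b) : ∃ u v, P u ∧ ¬ P v ∧ r u v :=
  (hs a b).exists_rel_leaving ha hb

variable [Fintype V] {n : ℕ}

theorem KStrong.exists_rel_leaving (hs : KStrong r n) {S : Finset V} (hS : #S < n)
    {P : V → Prop} {a b : V} (haS : a ∉ S) (hbS : b ∉ S) (ha : P a) (hb : ¬ P b) :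
    ∃ u v, u ∉ S ∧ v ∉ S ∧ P u ∧ ¬ P v ∧ r u v := by
  obtain ⟨u, v, hu, hv, huS, hvS, huv⟩ :=
    (hs.2 S (by rwa [Set.ncard_coe_finset]) a b haS hbS).exists_rel_leaving ha hb
  exact ⟨u, v, huS, hvS, hu, hv, huv⟩

theorem KStrong.stronglyConnected_compl_s7 (hs : KStrong r n) {S : Finset V} (hS : #S < n) :
    StronglyConnected fun a b : {v // v ∉ S} => r a b := by
  intro a b
  by_contra hab
  obtain ⟨u, v, huS, hvS, ⟨hu, hau⟩, hv, huv⟩ :=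
    hs.exists_rel_leaving hS (P := fun v => ∃ hv : v ∉ S, Relation.ReflTransGen _ a ⟨v, hv⟩)
      a.2 b.2 ⟨a.2, .refl⟩ fun ⟨_, h⟩ => hab h
  exact hv ⟨hvS, hau.tail (b := (⟨u, hu⟩ : {v // v ∉ S})) (c := ⟨v, hvS⟩) huv⟩

theorem KStrong.le_card_filter_rel (hs : KStrong r n) {y : V} (hy : ¬ r y y)
    [DecidablePred (r · y)] : n ≤ #{v | r v y} := by
  classical
  by_contra! hlt
  obtain ⟨u, -, hu⟩ := exists_mem_notMem_of_card_lt_card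
    (s := insert y ({v | r v y} : Finset V)) (t := univ)
    (by rw [card_univ]; linarith [card_insert_le y ({v | r v y} : Finset V), hs.1])
  rw [mem_insert, not_or] at hu
  obtain ⟨c, d, hcS, -, hc, hd, hcd⟩ :=
    hs.exists_rel_leaving hlt (P := (· ≠ y)) (by simpa using hu.2) (by simpa using hy) hu.1
      (not_not.mpr rfl)
  rw [not_not] at hd
  subst hd
  exact hcS (by simpa using hcd)

end Connectivity

section Camion

variable {r : V → V → Prop}

def IsCycle (r : V → V → Prop) (l : List V) : Prop :=
  l.Nodup ∧ Cycle.Chain r (l : Cycle V)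

theorem isCycle_cons_iff {c : V} {l : List V} :
    IsCycle r (c :: l) ↔ (c :: l).Nodup ∧ List.IsChain r (c :: (l ++ [c])) :=
  Iff.rfl

theorem IsCycle.exists_cons_perm {l : List V} (hl : IsCycle r l) {v : V} (hv : v ∈ l) :
    ∃ t, IsCycle r (v :: t) ∧ (v :: t).Perm l := by
  obtain ⟨s, t, rfl⟩ := List.append_of_mem hv
  have hrot : s ++ v :: t ~r v :: (t ++ s) := List.isRotated_append
  exact ⟨t ++ s, ⟨hrot.nodup_iff.mp hl.1, Cycle.coe_eq_coe.mpr hrot ▸ hl.2⟩, hrot.perm.symm⟩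

theorem IsCycle.map {W : Type*} {f : W → V} (hf : Function.Injective f) {l : List W}
    (hl : IsCycle (fun a b => r (f a) (f b)) l) : IsCycle r (l.map f) :=
  ⟨hl.1.map hf, by rw [← Cycle.map_coe, Cycle.chain_map]; exact hl.2⟩

/-- `v` goes just before the first vertex of the path that it dominates. -/
theorem IsTournament.exists_isChain_insert (hT : IsTournament r) {v b : V} :
    ∀ {a : V} {l : List V}, List.IsChain r (a :: (l ++ [b])) → v ∉ l → r a v →
      (∃ d ∈ l ++ [b], r v d) → ∃ l', List.IsChain r (a :: (l' ++ [b])) ∧ l'.Perm (v :: l)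
  | a, [], hch, _, hav, hd => by
    obtain ⟨d, hd, hvd⟩ := hd
    obtain rfl : d = b := by simpa using hd
    exact ⟨[v], by simp [hav, hvd], .refl _⟩
  | a, c :: t, hch, hv, hav, hd => by
    rw [List.cons_append, List.isChain_cons_cons] at hch
    by_cases hvc : r v c
    · exact ⟨v :: c :: t, by simp [hav, hvc, hch.2], .refl _⟩
    have hcv : r c v := (hT.rel_or_rel (List.ne_of_not_mem_cons hv).symm).resolve_right hvc
    obtain ⟨d, hd, hvd⟩ := hd
    have hd' : d ∈ t ++ [b] := by
      rcases List.mem_cons.mp hd with rfl | hd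
      · exact absurd hvd hvc
      · exact hd
    obtain ⟨l', hch', hperm⟩ :=
      hT.exists_isChain_insert hch.2 (List.not_mem_of_not_mem_cons hv) hcv ⟨d, hd', hvd⟩
    exact ⟨c :: l', List.IsChain.cons_cons hch.1 hch', (hperm.cons c).trans (.swap v c t)⟩

theorem IsCycle.exists_insert (hT : IsTournament r) {l : List V} (hl : IsCycle r l) {v : V}
    (hv : v ∉ l) (hin : ∃ c ∈ l, r c v) (hout : ∃ d ∈ l, r v d) :
    ∃ l', IsCycle r l' ∧ l'.Perm (v :: l) := by
  obtain ⟨c, hc, hcv⟩ := hin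
  obtain ⟨d, hd, hvd⟩ := hout
  obtain ⟨t, ⟨-, hch⟩, hperm⟩ := hl.exists_cons_perm hc
  obtain ⟨t', hch', hperm'⟩ := hT.exists_isChain_insert hch (fun h => hv (hperm.subset
    (List.mem_cons_of_mem c h))) hcv ⟨d, by simpa [or_comm] using hperm.symm.subset hd, hvd⟩
  have hperm'' : (c :: t').Perm (v :: l) :=
    (hperm'.cons c).trans ((List.Perm.swap v c t).trans (hperm.cons v))
  exact ⟨c :: t', ⟨hperm''.nodup_iff.mpr (List.nodup_cons.mpr ⟨hv, hl.1⟩), hch'⟩, hperm''⟩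

theorem IsCycle.exists_insert_arc (hT : IsTournament r) {l : List V} (hl : IsCycle r l)
    {c w u : V} (hc : c ∈ l) (hw : w ∉ l) (hu : u ∉ l) (hwu : r w u) (hin : ∀ a ∈ l, r a w)
    (hout : ∀ a ∈ l, r u a) : ∃ l', IsCycle r l' ∧ l'.Perm (w :: u :: l) := by
  obtain ⟨t, ⟨-, hch⟩, hperm⟩ := hl.exists_cons_perm hc
  have hperm' : (c :: w :: u :: t).Perm (w :: u :: l) :=
    (List.perm_middle (l₁ := [w, u])).symm.trans ((hperm.cons u).cons w)
  refine ⟨c :: w :: u :: t, ⟨hperm'.nodup_iff.mpr ?_, ?_⟩, hperm'⟩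
  · simp [hl.1, hw, hu, hT.ne_of_rel_s7 hwu]
  · have hmem : ∀ a ∈ t ++ [c], a ∈ l := fun a ha =>
      hperm.subset (List.mem_cons.mpr (by simpa [or_comm] using ha))
    refine .cons_cons (hin c hc) (.cons_cons hwu (List.isChain_cons.mpr ⟨?_, ?_⟩))
    · exact fun a ha => hout a (hmem a (List.mem_of_mem_head? ha))
    · exact (List.isChain_cons.mp hch).2

theorem IsTournament.exists_rel_dominated_dominating (hT : IsTournament r)
    (hs : StronglyConnected r) {l : List V} {c v : V} (hc : c ∈ l) (hv : v ∉ l)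
    (hsplit : ∀ v ∉ l, (∀ a ∈ l, r a v) ∨ (∀ a ∈ l, r v a)) :
    ∃ w u, w ∉ l ∧ u ∉ l ∧ (∀ a ∈ l, r a w) ∧ (∀ a ∈ l, r u a) ∧ r w u := by
  rcases hsplit v hv with hin | hout
  · obtain ⟨w, u, ⟨hw, hwin⟩, hu, hwu⟩ := hs.exists_rel_leaving
      (P := fun v => v ∉ l ∧ ∀ a ∈ l, r a v) ⟨hv, hin⟩ fun h => h.1 hc
    have hul : u ∉ l := fun hul => hT.asymm_s7 (hwin u hul) hwu
    exact ⟨w, u, hw, hul, hwin, (hsplit u hul).resolve_left fun h => hu ⟨hul, h⟩, hwu⟩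
  · obtain ⟨w, u, hw, hu, hwu⟩ := hs.exists_rel_leaving
      (P := fun v => ¬ (v ∉ l ∧ ∀ a ∈ l, r v a)) (fun h => h.1 hc) (not_not.mpr ⟨hv, hout⟩)
    obtain ⟨hu, huout⟩ := not_not.mp hu
    have hwl : w ∉ l := fun hwl => hT.asymm_s7 (huout w hwl) hwu
    exact ⟨w, u, hwl, hu, (hsplit w hwl).resolve_right fun h => hw ⟨hwl, h⟩, huout, hwu⟩

theorem IsTournament.exists_isCycle (hT : IsTournament r) (hs : StronglyConnected r) {u v : V}
    (huv : u ≠ v) : ∃ l, IsCycle r l ∧ l ≠ [] := by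
  obtain ⟨w, w', -, -, huw, hw'u, hww'⟩ := hT.exists_rel_dominated_dominating hs
    (List.mem_singleton_self u) (by simpa using huv.symm) fun v hv =>
      (hT.rel_or_rel (by simpa [eq_comm] using hv)).imp (by simpa using ·) (by simpa using ·)
  simp only [List.mem_singleton, forall_eq] at huw hw'u
  refine ⟨[u, w, w'], ⟨?_, ?_⟩, List.cons_ne_nil _ _⟩
  · simp [hT.ne_of_rel_s7 huw, hT.ne_of_rel_s7 hww', (hT.ne_of_rel_s7 hw'u).symm]
  · simp [Cycle.chain_coe_cons, List.isChain_cons_cons, huw, hww', hw'u]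

theorem IsCycle.exists_longer (hT : IsTournament r) (hs : StronglyConnected r) {l : List V}
    (hl : IsCycle r l) (hne : l ≠ []) {v : V} (hv : v ∉ l) :
    ∃ l', IsCycle r l' ∧ l.length < l'.length := by
  by_cases hmix : ∃ v ∉ l, (∃ c ∈ l, r c v) ∧ ∃ d ∈ l, r v d
  · obtain ⟨v, hv, hin, hout⟩ := hmix
    obtain ⟨l', hl', hperm⟩ := hl.exists_insert hT hv hin hout
    exact ⟨l', hl', by simp [hperm.length_eq]⟩
  push Not at hmix
  have hsplit : ∀ v ∉ l, (∀ a ∈ l, r a v) ∨ (∀ a ∈ l, r v a) := by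
    refine fun v hv => or_iff_not_imp_right.mpr fun hnot => ?_
    push Not at hnot
    obtain ⟨c, hc, hvc⟩ := hnot
    have hcv : r c v := (hT.rel_or_rel (ne_of_mem_of_not_mem hc hv)).resolve_right hvc
    exact fun a ha => (hT.rel_or_rel (ne_of_mem_of_not_mem ha hv)).resolve_right
      (hmix v hv ⟨c, hc, hcv⟩ a ha)
  obtain ⟨c, hc⟩ := List.exists_mem_of_ne_nil l hne
  obtain ⟨w, u, hw, hu, hin, hout, hwu⟩ := hT.exists_rel_dominated_dominating hs hc hv hsplit
  obtain ⟨l', hl', hperm⟩ := hl.exists_insert_arc hT hc hw hu hwu hin hout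
  exact ⟨l', hl', by simp [hperm.length_eq]⟩

/-- Camion's theorem. -/
theorem IsTournament.exists_isCycle_forall_mem [Fintype V] (hT : IsTournament r)
    (hs : StronglyConnected r) {u v : V} (huv : u ≠ v) : ∃ l, IsCycle r l ∧ ∀ w, w ∈ l := by
  by_contra! hno
  have hgrow : ∀ n, ∃ l, IsCycle r l ∧ l ≠ [] ∧ n ≤ l.length := by
    intro n
    induction n with
    | zero =>
      obtain ⟨l, hl, hne⟩ := hT.exists_isCycle hs huv
      exact ⟨l, hl, hne, Nat.zero_le _⟩
    | succ n ih =>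
      obtain ⟨l, hl, hne, hn⟩ := ih
      obtain ⟨w, hw⟩ := hno l hl
      obtain ⟨l', hl', hlt⟩ := hl.exists_longer hT hs hne hw
      exact ⟨l', hl', List.ne_nil_of_length_pos (by omega), by omega⟩
  obtain ⟨l, hl, -, hlen⟩ := hgrow (Fintype.card V + 1)
  have := hl.1.length_le_card
  omega

end Camion

section Dipaths

variable {r : V → V → Prop}

theorem isDipath_cons_append_iff {x y : V} {m : List V} :
    IsDipath r x y (x :: (m ++ [y])) ↔
      List.IsChain r (x :: (m ++ [y])) ∧ (x :: (m ++ [y])).Nodup := by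
  refine ⟨fun h => ⟨h.1, h.2.1⟩, fun h => ⟨h.1, h.2, rfl, ?_⟩⟩
  exact List.getLast?_concat (l := x :: m)

theorem IsCycle.exists_isDipath_isDipath {l : List V} (hl : IsCycle r l) {x y : V} (hx : x ∈ l)
    (hy : y ∈ l) (hxy : x ≠ y) :
    ∃ P₁ P₂, IsDipath r x y P₁ ∧ IsDipath r y x P₂ ∧ (∀ w ∈ P₁, w ∈ P₂ → w = x ∨ w = y) ∧
      ∀ v, v ∈ l ↔ v ∈ P₁ ∨ v ∈ P₂ := by
  obtain ⟨t, hcyc, hperm⟩ := hl.exists_cons_perm hx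
  obtain ⟨t₁, t₂, rfl⟩ := List.append_of_mem
    ((List.mem_cons.mp (hperm.symm.subset hy)).resolve_left hxy.symm)
  obtain ⟨hnd, hch⟩ := isCycle_cons_iff.mp hcyc
  rw [List.append_assoc, List.cons_append] at hch
  obtain ⟨hch₁, hch₂⟩ := List.isChain_cons_split.mp hch
  refine ⟨x :: (t₁ ++ [y]), y :: (t₂ ++ [x]), isDipath_cons_append_iff.mpr ⟨hch₁, ?_⟩,
    isDipath_cons_append_iff.mpr ⟨hch₂, ?_⟩, ?_, fun v => ?_⟩
  · simp only [List.nodup_cons, List.nodup_append]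
    grind
  · simp only [List.nodup_cons, List.nodup_append]
    grind
  · simp only [List.mem_cons, List.mem_append]
    grind
  · rw [← hperm.mem_iff]
    simp only [List.mem_cons, List.mem_append]
    tauto

end Dipaths

theorem KStrong.exists_isDipath_isDipath_compl [Fintype V] {r : V → V → Prop} {n : ℕ}
    (hT : IsTournament r) (hs : KStrong r n) {W : Finset V} (hW : #W < n) {x y : V}
    (hx : x ∉ W) (hy : y ∉ W) (hxy : x ≠ y) :
    ∃ P₁ P₂, IsDipath r x y P₁ ∧ IsDipath r y x P₂ ∧ (∀ w ∈ P₁, w ∈ P₂ → w = x ∨ w = y) ∧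
      ∀ v, v ∈ P₁ ∨ v ∈ P₂ ↔ v ∉ W := by
  classical
  obtain ⟨l, hl, hall⟩ := (hT.comap_s7 Subtype.val_injective).exists_isCycle_forall_mem
    (hs.stronglyConnected_compl_s7 hW) (u := ⟨x, hx⟩) (v := ⟨y, hy⟩) (by simpa using hxy)
  obtain ⟨P₁, P₂, h₁, h₂, h₁₂, hmem⟩ := (hl.map Subtype.val_injective).exists_isDipath_isDipath
    (List.mem_map_of_mem (hall ⟨x, hx⟩)) (List.mem_map_of_mem (hall ⟨y, hy⟩)) hxy
  refine ⟨P₁, P₂, h₁, h₂, h₁₂, fun v => (hmem v).symm.trans ⟨fun hv => ?_, fun hv =>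
    List.mem_map_of_mem (hall ⟨v, hv⟩)⟩⟩
  obtain ⟨w, -, rfl⟩ := List.mem_map.mp hv
  exact w.2

section Assembly

variable {r : V → V → Prop} {x y : V}

theorem weakStarContainer_of_list {L : List (List V)}
    (hpath : ∀ p ∈ L, IsDipath r x y p ∨ IsDipath r y x p)
    (hdisj : L.Pairwise fun p q => p ≠ q ∧ ∀ w ∈ p, w ∈ q → w = x ∨ w = y)
    (hcov : ∀ w, ∃ p ∈ L, w ∈ p) : WeakStarContainer r x y L.length := by
  have hinj : Function.Injective L.get := List.nodup_iff_injective_get.mp (hdisj.imp And.left)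
  refine ⟨L.get, hinj, fun i => hpath _ (L.get_mem i), fun i j hij w hi hj => ?_, fun w => ?_⟩
  · have : Std.Symm fun p q : List V => ∀ w ∈ p, w ∈ q → w = x ∨ w = y :=
      ⟨fun _ _ h w hq hp => h w hp hq⟩
    exact (hdisj.imp And.right).forall (L.get_mem i) (L.get_mem j) (hinj.ne hij) w hi hj
  · obtain ⟨p, hp, hwp⟩ := hcov w
    obtain ⟨i, rfl⟩ := List.mem_iff_get.mp hp
    exact ⟨i, hwp⟩

end Assembly

section Bridges

variable {r : V → V → Prop} {x y : V}

def IsBridge (r : V → V → Prop) (x y : V) (m : List V) : Prop :=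
  m ≠ [] ∧ (IsDipath r x y (x :: (m ++ [y])) ∨ IsDipath r y x (y :: (m ++ [x])))

open Classical in
noncomputable def bridgePath (r : V → V → Prop) (x y : V) (m : List V) : List V :=
  if IsDipath r x y (x :: (m ++ [y])) then x :: (m ++ [y]) else y :: (m ++ [x])

theorem mem_bridgePath {m : List V} {v : V} :
    v ∈ bridgePath r x y m ↔ v = x ∨ v = y ∨ v ∈ m := by
  unfold bridgePath
  split_ifs <;> simp <;> tauto

theorem IsBridge.isDipath_bridgePath {m : List V} (h : IsBridge r x y m) :
    IsDipath r x y (bridgePath r x y m) ∨ IsDipath r y x (bridgePath r x y m) := by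
  unfold bridgePath
  split_ifs with hxy
  · exact .inl hxy
  · exact .inr (h.2.resolve_left hxy)

theorem IsBridge.left_notMem {m : List V} (h : IsBridge r x y m) : x ∉ m := by
  rcases h.2 with h | h <;> have := h.2.1 <;> simp [List.nodup_append] at this <;> tauto

theorem IsBridge.right_notMem {m : List V} (h : IsBridge r x y m) : y ∉ m := by
  rcases h.2 with h | h <;> have := h.2.1 <;> simp [List.nodup_append] at this <;> tauto

theorem IsBridge.ne_and_internallyDisjoint {m P : List V} (hm : IsBridge r x y m)
    (hP : ∀ v ∈ m, v ∉ P) :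
    P ≠ bridgePath r x y m ∧ ∀ w ∈ P, w ∈ bridgePath r x y m → w = x ∨ w = y := by
  obtain ⟨w, hw⟩ := List.exists_mem_of_ne_nil m hm.1
  refine ⟨fun h => hP w hw (h ▸ mem_bridgePath.mpr (.inr (.inr hw))), fun w hwP hwm => ?_⟩
  rcases mem_bridgePath.mp hwm with h | h | h
  exacts [.inl h, .inr h, absurd hwP (hP w h)]

theorem pairwise_bridgePath {mids : List (List V)} (hbr : ∀ m ∈ mids, IsBridge r x y m)
    (hnd : mids.flatten.Nodup) : (mids.map (bridgePath r x y)).Pairwise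
      fun p q => p ≠ q ∧ ∀ w ∈ p, w ∈ q → w = x ∨ w = y := by
  rw [List.pairwise_map]
  refine (List.nodup_flatten.mp hnd).2.imp_of_mem fun {m m'} hm hm' hdisj =>
    (hbr m' hm').ne_and_internallyDisjoint fun v hv hvm => ?_
  rcases mem_bridgePath.mp hvm with rfl | rfl | h
  exacts [(hbr m' hm').left_notMem hv, (hbr m' hm').right_notMem hv, hdisj h hv]

theorem weakStarContainer_of_bridges {mids : List (List V)}
    (hbr : ∀ m ∈ mids, IsBridge r x y m) (hnd : mids.flatten.Nodup) {P₁ P₂ : List V}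
    (h₁ : IsDipath r x y P₁) (h₂ : IsDipath r y x P₂) (hxy : x ≠ y)
    (h₁₂ : ∀ w ∈ P₁, w ∈ P₂ → w = x ∨ w = y)
    (hcov : ∀ v, v ∈ P₁ ∨ v ∈ P₂ ↔ v ∉ mids.flatten) :
    WeakStarContainer r x y (mids.length + 2) := by
  have hsep : ∀ P, (∀ v ∈ P, v ∉ mids.flatten) → ∀ m ∈ mids,
      P ≠ bridgePath r x y m ∧ ∀ w ∈ P, w ∈ bridgePath r x y m → w = x ∨ w = y :=
    fun P hP m hm => (hbr m hm).ne_and_internallyDisjoint fun v hv hvP =>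
      hP v hvP (List.mem_flatten.mpr ⟨m, hm, hv⟩)
  have hP₁ : ∀ v ∈ P₁, v ∉ mids.flatten := fun v hv => (hcov v).mp (.inl hv)
  have hP₂ : ∀ v ∈ P₂, v ∉ mids.flatten := fun v hv => (hcov v).mp (.inr hv)
  have hne : P₁ ≠ P₂ := fun h => hxy (Option.some_inj.mp (h₁.2.2.1.symm.trans (h ▸ h₂.2.2.1)))
  have := weakStarContainer_of_list (r := r) (x := x) (y := y)
    (L := P₁ :: P₂ :: mids.map (bridgePath r x y)) ?_ ?_ ?_
  · simpa using this
  · simp only [List.mem_cons, List.mem_map]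
    rintro p (rfl | rfl | ⟨m, hm, rfl⟩)
    exacts [.inl h₁, .inr h₂, (hbr m hm).isDipath_bridgePath]
  · simp only [List.pairwise_cons, List.mem_cons, List.mem_map]
    refine ⟨?_, fun q => ?_, pairwise_bridgePath hbr hnd⟩
    · rintro q (rfl | ⟨m, hm, rfl⟩)
      exacts [⟨hne, h₁₂⟩, hsep P₁ hP₁ m hm]
    · rintro ⟨m, hm, rfl⟩
      exact hsep P₂ hP₂ m hm
  · intro w
    by_cases hw : w ∈ mids.flatten
    · obtain ⟨m, hm, hwm⟩ := List.mem_flatten.mp hw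
      exact ⟨bridgePath r x y m, by simp only [List.mem_cons, List.mem_map]; tauto,
        mem_bridgePath.mpr (.inr (.inr hwm))⟩
    · rcases (hcov w).mpr hw with h | h
      exacts [⟨P₁, by simp, h⟩, ⟨P₂, by simp, h⟩]

end Bridges

section Detours

variable {r : V → V → Prop} {x y : V}

def IsMiddleVertex (r : V → V → Prop) (x y v : V) : Prop :=
  (r x v ∧ r v y) ∨ (r y v ∧ r v x)

def IsDetourArc (r : V → V → Prop) (x y : V) (e : V × V) : Prop :=
  (r x e.1 ∧ r y e.1) ∧ (r e.2 x ∧ r e.2 y) ∧ r e.1 e.2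

theorem length_flatMap_pair (M : List (V × V)) :
    (M.flatMap fun e => [e.1, e.2]).length = 2 * M.length := by
  simp [List.length_flatMap, mul_comm]

theorem IsTournament.isMiddleVertex_or (hT : IsTournament r) {v : V} (hvx : v ≠ x)
    (hvy : v ≠ y) : IsMiddleVertex r x y v ∨ (r x v ∧ r y v) ∨ (r v x ∧ r v y) := by
  rcases hT.rel_or_rel hvx.symm with hx | hx <;> rcases hT.rel_or_rel hvy.symm with hy | hy
  · exact .inr (.inl ⟨hx, hy⟩)
  · exact .inl (.inl ⟨hx, hy⟩)
  · exact .inl (.inr ⟨hy, hx⟩)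
  · exact .inr (.inr ⟨hx, hy⟩)

theorem IsMiddleVertex.isBridge (hT : IsTournament r) (hxy : x ≠ y) {v : V}
    (h : IsMiddleVertex r x y v) : IsBridge r x y [v] := by
  refine ⟨List.cons_ne_nil _ _, ?_⟩
  rcases h with ⟨h₁, h₂⟩ | ⟨h₁, h₂⟩
  · refine .inl (isDipath_cons_append_iff.mpr ⟨?_, ?_⟩)
    · simp [h₁, h₂]
    · simp [hxy, hT.ne_of_rel_s7 h₁, hT.ne_of_rel_s7 h₂]
  · refine .inr (isDipath_cons_append_iff.mpr ⟨?_, ?_⟩)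
    · simp [h₁, h₂]
    · simp [hxy.symm, hT.ne_of_rel_s7 h₁, hT.ne_of_rel_s7 h₂]

theorem IsDetourArc.isBridge (hT : IsTournament r) (hxy : x ≠ y) {e : V × V}
    (h : IsDetourArc r x y e) : IsBridge r x y [e.1, e.2] := by
  obtain ⟨⟨hx₁, hy₁⟩, ⟨h₂x, h₂y⟩, h₁₂⟩ := h
  refine ⟨List.cons_ne_nil _ _, .inl (isDipath_cons_append_iff.mpr ⟨?_, ?_⟩)⟩
  · simp [hx₁, h₁₂, h₂y]
  · simp [hxy, hT.ne_of_rel_s7 hx₁, (hT.ne_of_rel_s7 h₂x).symm, (hT.ne_of_rel_s7 hy₁).symm,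
      hT.ne_of_rel_s7 h₁₂, hT.ne_of_rel_s7 h₂y]

theorem IsMiddleVertex.ne_of_isDetourArc (hT : IsTournament r) {v : V}
    (hv : IsMiddleVertex r x y v) {e : V × V} (he : IsDetourArc r x y e) :
    v ≠ e.1 ∧ v ≠ e.2 := by
  obtain ⟨⟨hx₁, hy₁⟩, ⟨h₂x, h₂y⟩, -⟩ := he
  constructor <;> rintro rfl <;> rcases hv with ⟨h₁, h₂⟩ | ⟨h₁, h₂⟩
  exacts [hT.asymm_s7 h₂ hy₁, hT.asymm_s7 h₂ hx₁, hT.asymm_s7 h₁ h₂x, hT.asymm_s7 h₁ h₂y]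

theorem exists_bridges_of_isMiddleVertex_of_isDetourArc (hT : IsTournament r) (hxy : x ≠ y)
    {G₀ : Finset V} (hG₀ : ∀ v ∈ G₀, IsMiddleVertex r x y v) {M : List (V × V)}
    (hM : ∀ e ∈ M, IsDetourArc r x y e) (hMnd : (M.flatMap fun e => [e.1, e.2]).Nodup) :
    ∃ mids : List (List V), mids.length = #G₀ + M.length ∧ (∀ m ∈ mids, IsBridge r x y m) ∧
      mids.flatten.Nodup ∧ mids.flatten.length = #G₀ + 2 * M.length := by
  have hflat : (G₀.toList.map (fun v => [v]) ++ M.map fun e => [e.1, e.2]).flatten =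
      G₀.toList ++ M.flatMap fun e => [e.1, e.2] := by
    rw [List.flatten_append, ← List.flatMap_def, ← List.flatMap_def, List.flatMap_singleton']
  refine ⟨G₀.toList.map (fun v => [v]) ++ M.map fun e => [e.1, e.2], by simp, ?_, ?_, ?_⟩
  · simp only [List.mem_append, List.mem_map, mem_toList]
    rintro m (⟨v, hv, rfl⟩ | ⟨e, he, rfl⟩)
    exacts [(hG₀ v hv).isBridge hT hxy, (hM e he).isBridge hT hxy]
  · rw [hflat, List.nodup_append]
    refine ⟨G₀.nodup_toList, hMnd, fun v hv w hw => ?_⟩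
    simp only [List.mem_flatMap, List.mem_cons, List.not_mem_nil, or_false] at hw
    obtain ⟨e, he, hwe⟩ := hw
    have hne := (hG₀ v (mem_toList.mp hv)).ne_of_isDetourArc hT (hM e he)
    rcases hwe with rfl | rfl
    exacts [hne.1, hne.2]
  · rw [hflat, List.length_append, length_toList, length_flatMap_pair]

variable [Fintype V] {n : ℕ}

theorem KStrong.exists_commonInNeighbor_notMem (hT : IsTournament r)
    (hs : KStrong r n) {C G : Finset V} (hG : ∀ v, v ∈ G ↔ IsMiddleVertex r x y v)
    (hCG : #C + #G + 1 < n) : ∃ b ∉ C, r b x ∧ r b y := by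
  classical
  by_contra! hB
  have hsub : ({v | r v y} : Finset V) ⊆ insert x (C ∪ G) := by
    intro v hv
    rw [mem_filter] at hv
    rw [mem_insert, mem_union, hG]
    by_cases hvx : v = x
    · exact .inl hvx
    rcases hT.isMiddleVertex_or hvx (hT.ne_of_rel_s7 hv.2) with h | h | h
    · exact .inr (.inr h)
    · exact absurd hv.2 (hT.asymm_s7 h.2)
    · exact .inr (.inl (by_contra fun hvC => hB v hvC h.1 h.2))
  have := (hs.le_card_filter_rel (hT.1 y)).trans (card_le_card hsub)
  linarith [card_insert_le x (C ∪ G), card_union_le C G]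

theorem KStrong.exists_isDetourArc_avoiding (hT : IsTournament r) (hs : KStrong r n)
    (hxy : x ≠ y) {C G : Finset V} (hG : ∀ v, v ∈ G ↔ IsMiddleVertex r x y v) (hxC : x ∉ C)
    (hCG : #C + #G + 1 < n) : ∃ e, IsDetourArc r x y e ∧ e.1 ∉ C ∧ e.2 ∉ C := by
  classical
  obtain ⟨b, hbC, hbx, hby⟩ := hs.exists_commonInNeighbor_notMem hT hG hCG
  have hxG : x ∉ G := fun h => by rcases (hG x).mp h with ⟨h, -⟩ | ⟨-, h⟩ <;> exact hT.1 x h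
  have hS : #(insert y (C ∪ G)) < n := (card_insert_le _ _).trans_lt
    (by linarith [card_union_le C G])
  have hxS : x ∉ insert y (C ∪ G) := by simp [hxy, hxC, hxG]
  have hbS : b ∉ insert y (C ∪ G) := by
    simp only [mem_insert, mem_union, hG, not_or]
    refine ⟨hT.ne_of_rel_s7 hby, hbC, ?_⟩
    rintro (⟨h, -⟩ | ⟨h, -⟩)
    exacts [hT.asymm_s7 h hbx, hT.asymm_s7 h hby]
  obtain ⟨a, b', haS, hb'S, ha, hb', hab⟩ := hs.exists_rel_leaving hS
    (P := fun v => v = x ∨ (r x v ∧ r y v)) hxS hbS (.inl rfl)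
    (by rintro (rfl | ⟨h, -⟩); exacts [hT.1 _ hbx, hT.asymm_s7 h hbx])
  simp only [mem_insert, mem_union, hG, not_or] at haS hb'S
  push Not at hb'
  have hb'B : r b' x ∧ r b' y := by
    rcases hT.isMiddleVertex_or hb'.1 hb'S.1 with h | h | h
    exacts [absurd h hb'S.2.2, absurd h.2 (hb'.2 h.1), h]
  have haA : r x a ∧ r y a := ha.resolve_left (by rintro rfl; exact hT.asymm_s7 hab hb'B.1)
  exact ⟨(a, b'), ⟨haA, hb'B, hab⟩, haS.2.1, hb'S.2.1⟩

theorem KStrong.exists_isDetourArc_matching (hT : IsTournament r) (hs : KStrong r n)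
    (hxy : x ≠ y) {G : Finset V} (hG : ∀ v, v ∈ G ↔ IsMiddleVertex r x y v) :
    ∀ j, 2 * j + #G < n → ∃ M : List (V × V), M.length = j ∧
      (∀ e ∈ M, IsDetourArc r x y e) ∧ (M.flatMap fun e => [e.1, e.2]).Nodup := by
  classical
  intro j
  induction j with
  | zero => exact fun _ => ⟨[], rfl, by simp, by simp⟩
  | succ j ih =>
    intro hj
    obtain ⟨M, hlen, hM, hnd⟩ := ih (by omega)
    set C := (M.flatMap fun e => [e.1, e.2]).toFinset
    have hC : #C = 2 * j := by rw [List.toFinset_card_of_nodup hnd, length_flatMap_pair, hlen]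
    have hxC : x ∉ C := by
      simp only [C, List.mem_toFinset, List.mem_flatMap, List.mem_cons, List.not_mem_nil,
        or_false, not_exists, not_and]
      rintro e he (h | h) <;> subst h
      exacts [hT.1 _ (hM e he).1.1, hT.1 _ (hM e he).2.1.1]
    obtain ⟨e, he, he₁, he₂⟩ :=
      hs.exists_isDetourArc_avoiding hT hxy hG hxC (by omega)
    refine ⟨e :: M, by simp [hlen], List.forall_mem_cons.mpr ⟨he, hM⟩, ?_⟩
    simp only [C, List.mem_toFinset] at he₁ he₂
    simp [hnd, he₁, he₂, hT.ne_of_rel_s7 he.2.2]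

theorem KStrong.exists_bridges {k : ℕ} (hT : IsTournament r) (hs : KStrong r (2 * k))
    (hk : 1 ≤ k) (hxy : x ≠ y) (hmid : ∃ v, IsMiddleVertex r x y v) :
    ∃ mids : List (List V), mids.length = k ∧ (∀ m ∈ mids, IsBridge r x y m) ∧
      mids.flatten.Nodup ∧ mids.flatten.length < 2 * k := by
  classical
  set G : Finset V := {v | IsMiddleVertex r x y v}
  have hG : ∀ v, v ∈ G ↔ IsMiddleVertex r x y v := by simp [G]
  have hG1 : 1 ≤ #G := by
    obtain ⟨v, hv⟩ := hmid
    exact card_pos.mpr ⟨v, (hG v).mpr hv⟩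
  obtain ⟨G₀, hG₀, M, hM, hMnd, hsum, hG₀1⟩ : ∃ G₀ ⊆ G, ∃ M : List (V × V),
      (∀ e ∈ M, IsDetourArc r x y e) ∧ (M.flatMap fun e => [e.1, e.2]).Nodup ∧
      #G₀ + M.length = k ∧ 1 ≤ #G₀ := by
    rcases le_or_gt k #G with h | h
    · obtain ⟨G₀, hsub, hcard⟩ := exists_subset_card_eq h
      exact ⟨G₀, hsub, [], by simp, by simp, by simp [hcard], by omega⟩
    · obtain ⟨M, hlen, hM, hnd⟩ := hs.exists_isDetourArc_matching hT hxy hG (k - #G) (by omega)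
      exact ⟨G, subset_rfl, M, hM, hnd, by omega, hG1⟩
  obtain ⟨mids, hlen, hbr, hnd, hflat⟩ :=
    exists_bridges_of_isMiddleVertex_of_isDetourArc hT hxy (fun v hv => (hG v).mp (hG₀ hv)) hM hMnd
  exact ⟨mids, by omega, hbr, hnd, by omega⟩

end Detours

/-- For `k ≥ 1`, a `2k`-strong tournament with a directed path of
length 2 (in one direction or the other) between any two distinct vertices is
`(k+2)*`-weakly connected. -/
theorem stmt7 [Fintype V] (r : V → V → Prop) (hT : IsTournament r)
    (k : ℕ) (hk : 1 ≤ k) (hstrong : KStrong r (2 * k))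
    (h2 : ∀ x y : V, x ≠ y → (∃ w : V, r x w ∧ r w y) ∨ (∃ w : V, r y w ∧ r w x))
    (x y : V) (hxy : x ≠ y) :
    WeakStarContainer r x y (k + 2) := by
  classical
  obtain ⟨mids, hlen, hbr, hnd, hcard⟩ := hstrong.exists_bridges hT hk hxy
    ((h2 x y hxy).elim (fun ⟨w, hw⟩ => ⟨w, .inl hw⟩) fun ⟨w, hw⟩ => ⟨w, .inr hw⟩)
  have hx : x ∉ mids.flatten.toFinset := by
    simpa [List.mem_flatten] using fun m hm => (hbr m hm).left_notMem
  have hy : y ∉ mids.flatten.toFinset := by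
    simpa [List.mem_flatten] using fun m hm => (hbr m hm).right_notMem
  obtain ⟨P₁, P₂, h₁, h₂, h₁₂, hcov⟩ := hstrong.exists_isDipath_isDipath_compl hT
    ((List.toFinset_card_le _).trans_lt hcard) hx hy hxy
  rw [← hlen]
  exact weakStarContainer_of_bridges hbr hnd h₁ h₂ hxy h₁₂ (by simpa using hcov)
end

section
/- Let T be a tournament with n vertices whose irregularity satisfies i(T) ≤ k, let t ≥ 2 be an integer with n ≥ 6t + 5k, and let x, y be distinct vertices with an arc from x to y. Let A be the set of vertices of T − {x,y} dominated by x and B the set of vertices of T − {x,y} dominating y, and suppose A ∩ B = ∅. Then there exist at least t − 2 internally disjoint directed paths of length 3 from x to y. -/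
variable {V : Type*}

/-! With `A ∩ B = ∅`, the set `A` is exactly the set of common out-neighbours of `x` and `y`,
and `B` the set of common in-neighbours; the irregularity bound gives
`|A|, |B| ≥ (n - k - 3) / 2`. Paths `x → a → b → y` come from a matching of arcs from `A` to
`B`, chosen greedily. If `A' ⊆ A` and `B' ⊆ B` span no arc from `A'` to `B'`, then `B'`
dominates `A' ∪ {x, y}`, so a vertex of largest score inside `B'` has out-degree at least
`|A'| + 2 + (|B'| - 1) / 2`, while every out-degree is at most `(n + k - 1) / 2`; dually for
`A'`. Together, `3 (|A'| + |B'|) + 8 ≤ 2 (n + k)`, which fails as long as fewer than `t - 2`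
pairs have been removed. -/

open Finset Function

theorem IsTournament.swap {r : V → V → Prop} (hT : IsTournament r) : IsTournament (swap r) :=
  ⟨hT.1, fun u v huv => hT.2 v u huv.symm⟩

theorem IrregularityLE.swap {r : V → V → Prop} {k : ℕ} (h : IrregularityLE r k) :
    IrregularityLE (swap r) k := fun x => by
  have hx := h x
  rwa [← Int.natAbs_neg, neg_sub] at hx

namespace IsTournament

variable {r : V → V → Prop} [DecidableRel r]

theorem card_filter_add_card_filter_add_one (hT : IsTournament r) {S : Finset V} {u : V}
    (hu : u ∈ S) : #{v ∈ S | r u v} + #{v ∈ S | r v u} + 1 = #S := by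
  classical
  have hsplit : S = insert u ({v ∈ S | r u v} ∪ {v ∈ S | r v u}) := by
    ext v
    simp only [mem_insert, mem_union, mem_filter]
    rcases eq_or_ne v u with rfl | hvu
    · simpa
    · have := hT.2 u v hvu.symm
      tauto
  have hdisj : Disjoint {v ∈ S | r u v} {v ∈ S | r v u} :=
    disjoint_filter.2 fun v _ huv hvu => hT.1 v (by
      rcases eq_or_ne u v with rfl | h
      · exact huv
      · exact absurd hvu ((hT.2 u v h).1 huv))
  conv_rhs => rw [hsplit]
  rw [card_insert_of_notMem (by simp [hT.1 u]), card_union_of_disjoint hdisj]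

theorem exists_le_two_mul_card_filter_add_one (hT : IsTournament r) {S : Finset V}
    (hS : S.Nonempty) : ∃ u ∈ S, #S ≤ 2 * #{v ∈ S | r u v} + 1 := by
  by_contra! hlt
  have hswap : ∑ u ∈ S, #{v ∈ S | r v u} = ∑ u ∈ S, #{v ∈ S | r u v} := by
    simp only [card_filter]
    exact sum_comm
  have htotal : ∑ u ∈ S, (#{v ∈ S | r u v} + #{v ∈ S | r v u} + 1) = ∑ _u ∈ S, #S :=
    sum_congr rfl fun u hu => hT.card_filter_add_card_filter_add_one hu
  have hsmall : ∑ u ∈ S, (2 * #{v ∈ S | r u v} + 1) < ∑ _u ∈ S, #S :=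
    sum_lt_sum_of_nonempty hS hlt
  rw [sum_add_distrib, sum_add_distrib, hswap] at htotal
  rw [sum_add_distrib, ← mul_sum] at hsmall
  omega

theorem exists_two_mul_card_add_card_le_of_forall_rel [Fintype V] (hT : IsTournament r) {B C : Finset V}
    (hB : B.Nonempty) (hBC : Disjoint B C) (h : ∀ b ∈ B, ∀ c ∈ C, r b c) :
    ∃ b ∈ B, 2 * #C + #B ≤ 2 * #(univ.filter (r b)) + 1 := by
  classical
  obtain ⟨b, hb, hscore⟩ := hT.exists_le_two_mul_card_filter_add_one hB
  refine ⟨b, hb, ?_⟩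
  have hout : #C + #{v ∈ B | r b v} ≤ #(univ.filter (r b)) := by
    rw [← card_union_of_disjoint (hBC.symm.mono_right (filter_subset _ _))]
    refine card_le_card fun v hv => ?_
    simp only [mem_union, mem_filter, mem_univ, true_and] at hv ⊢
    exact hv.elim (h b hb v) And.right
  omega

end IsTournament

theorem IrregularityLE.two_mul_card_out_bounds [Fintype V] {r : V → V → Prop} [DecidableRel r]
    {k : ℕ} (hT : IsTournament r) (h : IrregularityLE r k) (v : V) :
    2 * #(univ.filter (r v)) + 1 ≤ Fintype.card V + k ∧
      Fintype.card V ≤ 2 * #(univ.filter (r v)) + 1 + k := by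
  have hv := h v
  have hsum : #(univ.filter (r v)) + #(univ.filter fun w => r w v) + 1 = Fintype.card V :=
    hT.card_filter_add_card_filter_add_one (mem_univ v)
  simp only [Set.ncard_eq_toFinset_card', Set.toFinset_ofPred] at hv
  omega

theorem IsTournament.card_filter_and_add_one [Fintype V] {r : V → V → Prop} [DecidableRel r]
    (hT : IsTournament r) {x y : V} (hxy : r x y)
    (hAB : ∀ w : V, w ≠ x → w ≠ y → ¬ (r x w ∧ r w y)) :
    #{w | r x w ∧ r y w} + 1 = #(univ.filter (r x)) := by
  classical
  rw [← card_insert_of_notMem (s := {w | r x w ∧ r y w}) (a := y) (by simp [hT.1 y])]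
  congr 1
  ext w
  simp only [mem_insert, mem_filter, mem_univ, true_and]
  refine ⟨?_, fun hxw => ?_⟩
  · rintro (rfl | ⟨hxw, -⟩)
    exacts [hxy, hxw]
  · rcases eq_or_ne w y with rfl | hwy
    · exact Or.inl rfl
    · have hwx : w ≠ x := fun h => hT.1 x (h ▸ hxw)
      exact Or.inr ⟨hxw, (hT.2 y w hwy.symm).2 fun hwy' => hAB w hwx hwy ⟨hxw, hwy'⟩⟩

theorem IsTournament.exists_rel_of_two_mul_lt [Fintype V] {r : V → V → Prop} [DecidableRel r]
    (hT : IsTournament r) {N : ℕ} (hout : ∀ v, 2 * #(univ.filter (r v)) + 1 ≤ N)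
    (hin : ∀ v, 2 * #(univ.filter (Function.swap r v)) + 1 ≤ N) {A B C : Finset V}
    (hA : A.Nonempty) (hB : B.Nonempty) (hAB : Disjoint A B) (hBC : ∀ b ∈ B, ∀ c ∈ C, r b c)
    (hCA : ∀ c ∈ C, ∀ a ∈ A, r c a) (hlarge : 2 * N < 3 * (#A + #B) + 4 * #C) :
    ∃ a ∈ A, ∃ b ∈ B, r a b := by
  classical
  by_contra! hno
  have hBA : ∀ b ∈ B, ∀ a ∈ A, r b a := fun b hb a ha =>
    (hT.2 b a fun h => disjoint_left.1 hAB ha (h ▸ hb)).2 (hno a ha b hb)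
  have hAC : Disjoint A C := disjoint_left.2 fun a ha hc => hT.1 a (hCA a hc a ha)
  have hBC' : Disjoint B C := disjoint_left.2 fun b hb hc => hT.1 b (hBC b hb b hc)
  obtain ⟨b, -, hb⟩ := hT.exists_two_mul_card_add_card_le_of_forall_rel (C := A ∪ C) hB
    (disjoint_union_right.2 ⟨hAB.symm, hBC'⟩)
    fun b hb c hc => (mem_union.1 hc).elim (hBA b hb c) (hBC b hb c)
  obtain ⟨a, -, ha⟩ := hT.swap.exists_two_mul_card_add_card_le_of_forall_rel (C := B ∪ C) hA
    (disjoint_union_right.2 ⟨hAB, hAC⟩)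
    fun a ha c hc => (mem_union.1 hc).elim (fun hc => hBA c hc a ha) (fun hc => hCA c hc a ha)
  rw [card_union_of_disjoint hAC] at hb
  rw [card_union_of_disjoint hBC'] at ha
  have := hout b
  have := hin a
  omega

theorem exists_matching_of_forall_exists_rel [DecidableEq V] (r : V → V → Prop) (m : ℕ) :
    ∀ A B : Finset V,
      (∀ A' ⊆ A, ∀ B' ⊆ B, #A + #B < #A' + #B' + 2 * m → ∃ a ∈ A', ∃ b ∈ B', r a b) →
      ∃ f g : Fin m → V, Injective f ∧ Injective g ∧ ∀ i, f i ∈ A ∧ g i ∈ B ∧ r (f i) (g i) := by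
  induction m with
  | zero => exact fun _ _ _ => ⟨Fin.elim0, Fin.elim0, finZeroElim, finZeroElim, finZeroElim⟩
  | succ m ih =>
    intro A B h
    obtain ⟨a, ha, b, hb, hab⟩ := h A Subset.rfl B Subset.rfl (by omega)
    obtain ⟨f, g, hf, hg, hfg⟩ := ih (A.erase a) (B.erase b) fun A' hA' B' hB' hlt =>
      h A' (hA'.trans (erase_subset a A)) B' (hB'.trans (erase_subset b B)) (by
        rw [card_erase_of_mem ha, card_erase_of_mem hb] at hlt
        have := card_pos.2 ⟨a, ha⟩
        have := card_pos.2 ⟨b, hb⟩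
        omega)
    refine ⟨Fin.cons a f, Fin.cons b g, Fin.cons_injective_of_injective ?_ hf,
      Fin.cons_injective_of_injective ?_ hg, Fin.cases ⟨ha, hb, hab⟩ fun i => ?_⟩
    · rintro ⟨i, hi⟩
      exact notMem_erase a A (hi ▸ (hfg i).1)
    · rintro ⟨i, hi⟩
      exact notMem_erase b B (hi ▸ (hfg i).2.1)
    · obtain ⟨hfi, hgi, hr⟩ := hfg i
      exact ⟨mem_of_mem_erase hfi, mem_of_mem_erase hgi, hr⟩

theorem exists_internallyDisjoint_dipaths_of_matching {r : V → V → Prop} (hr : ∀ v, ¬ r v v)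
    {x y : V} (hxy : x ≠ y) {A B : Finset V} (hAB : Disjoint A B)
    (hA : ∀ a ∈ A, r x a ∧ r y a) (hB : ∀ b ∈ B, r b x ∧ r b y) {m : ℕ}
    {f g : Fin m → V} (hf : Injective f) (hg : Injective g)
    (hfg : ∀ i, f i ∈ A ∧ g i ∈ B ∧ r (f i) (g i)) :
    ∃ ps : Fin m → List V, Injective ps ∧
      (∀ i, IsDipath r x y (ps i) ∧ (ps i).length = 4) ∧ InternallyDisjoint x y ps := by
  have hfg_ne : ∀ i j, f i ≠ g j := fun i j h =>
    disjoint_left.1 hAB (hfg i).1 (h ▸ (hfg j).2.1)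
  have hf_ne : ∀ i, f i ≠ x ∧ f i ≠ y := fun i =>
    ⟨fun h => hr x (h ▸ (hA _ (hfg i).1).1), fun h => hr y (h ▸ (hA _ (hfg i).1).2)⟩
  have hg_ne : ∀ i, g i ≠ x ∧ g i ≠ y := fun i =>
    ⟨fun h => hr x (h ▸ (hB _ (hfg i).2.1).1), fun h => hr y (h ▸ (hB _ (hfg i).2.1).2)⟩
  refine ⟨fun i => [x, f i, g i, y], fun i j hij => hf (List.cons.inj (List.cons.inj hij).2).1,
    fun i => ⟨⟨?_, ?_, rfl, rfl⟩, rfl⟩, ?_⟩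
  · show List.IsChain r _
    simp [(hA _ (hfg i).1).1, (hfg i).2.2, (hB _ (hfg i).2.1).2]
  · simp [hxy, (hf_ne i).1.symm, (hf_ne i).2, (hg_ne i).1.symm, (hg_ne i).2, hfg_ne i i]
  · intro i j hij w hwi hwj
    simp only [List.mem_cons, List.not_mem_nil, or_false] at hwi hwj
    grind [hf.eq_iff, hg.eq_iff]

theorem stmt15_general [Fintype V] (r : V → V → Prop) (hT : IsTournament r)
    (k t : ℕ) (hirr : IrregularityLE r k)
    (hn : 6 * t + 5 * k ≤ Fintype.card V)
    (x y : V) (hxy : r x y)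
    (hAB : ∀ w : V, w ≠ x → w ≠ y → ¬ (r x w ∧ r w y)) :
    ∃ ps : Fin (t - 2) → List V, Function.Injective ps ∧
      (∀ i, IsDipath r x y (ps i) ∧ (ps i).length = 4) ∧
      InternallyDisjoint x y ps := by
  classical
  have hxy' : x ≠ y := fun h => hT.1 x (h ▸ hxy)
  have hA_card := hT.card_filter_and_add_one hxy hAB
  have hB_card : #{w | r w x ∧ r w y} + 1 = #(univ.filter (swap r y)) := by
    rw [← hT.swap.card_filter_and_add_one hxy fun w hy hx h => hAB w hx hy h.symm]
    simp only [swap, and_comm]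
  set A : Finset V := {w | r x w ∧ r y w}
  set B : Finset V := {w | r w x ∧ r w y}
  have hAB' : Disjoint A B := disjoint_filter.2 fun w _ hwA hwB =>
    (hT.2 x w fun h => hT.1 x (h ▸ hwA.1)).1 hwA.1 hwB.1
  have hx_deg := (hirr.two_mul_card_out_bounds hT x).2
  have hy_deg := (hirr.swap.two_mul_card_out_bounds hT.swap y).2
  obtain ⟨f, g, hf, hg, hfg⟩ := exists_matching_of_forall_exists_rel r (t - 2) A B
    fun A' hA' B' hB' hlt => by
      have := card_le_card hA'
      have := card_le_card hB'
      refine hT.exists_rel_of_two_mul_lt (fun v => (hirr.two_mul_card_out_bounds hT v).1)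
        (fun v => (hirr.swap.two_mul_card_out_bounds hT.swap v).1) (C := {x, y})
        (card_pos.1 (by omega)) (card_pos.1 (by omega)) (hAB'.mono hA' hB') ?_ ?_
        (by rw [card_pair hxy']; omega)
      · intro b hb
        simpa using (mem_filter.1 (hB' hb)).2
      · simp only [mem_insert, mem_singleton, forall_eq_or_imp, forall_eq]
        exact ⟨fun a ha => (mem_filter.1 (hA' ha)).2.1, fun a ha => (mem_filter.1 (hA' ha)).2.2⟩
  exact exists_internallyDisjoint_dipaths_of_matching hT.1 hxy' hAB'
    (fun a ha => (mem_filter.1 ha).2) (fun b hb => (mem_filter.1 hb).2) hf hg hfg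

/-- Let `T` be a tournament on `n ≥ 6t + 5k` vertices (`t ≥ 2`) with
irregularity at most `k`, and let `x` dominate `y`. If no vertex outside `{x,y}`
is both dominated by `x` and dominating `y` (i.e. `A ∩ B = ∅`), then there are at
least `t − 2` internally disjoint directed paths of length 3 from `x` to `y`. -/
theorem stmt15 [Fintype V] (r : V → V → Prop) (hT : IsTournament r)
    (k t : ℕ) (hirr : IrregularityLE r k) (ht : 2 ≤ t)
    (hn : 6 * t + 5 * k ≤ Fintype.card V)
    (x y : V) (hxy : r x y)
    (hAB : ∀ w : V, w ≠ x → w ≠ y → ¬ (r x w ∧ r w y)) :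
    ∃ ps : Fin (t - 2) → List V, Function.Injective ps ∧
      (∀ i, IsDipath r x y (ps i) ∧ (ps i).length = 4) ∧
      InternallyDisjoint x y ps :=
  stmt15_general r hT k t hirr hn x y hxy hAB
end
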